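/- arXiv:1112.3601 — 4 statements merged into one kernel-verified Lean document; each statement's English description precedes it below -/
import Mathlib

section
/- Let x, y be elements of a (possibly noncommutative) ring of formal power series over Q(q^{1/2}) satisfying x y = q^ε y x with ε = ±1. Then (−q^{1/2} x; q)_∞^{−ε} · y · (−q^{1/2} x; q)_∞^{ε} = y(1 + q^{ε/2} x), where (z; q)_∞ = ∏_{n≥0} (1 − q^n z) is the q-Pochhammer symbol. -/
open Filter

/-!
With `s = q^{1/2}` central, the relation `x y = s^{2ε} y x` gives
`(1 + s^k x) y = y (1 + s^{k+2ε} x)`: moving `y` through a factor of the Pochhammer product shifts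
that factor one step along the product. For `ε = 1` the partial products therefore satisfy
`P_N y (1 + s x) = y P_{N+1}`, and for `ε = -1` they satisfy `P_{N+1} y = y (1 + s⁻¹ x) P_N`.
Passing to the limit gives `P y (1 + s x) = y P`, resp. `P y = y (1 + s⁻¹ x) P`, and conjugating
by `P` gives the theorem.
-/

section Monoid

variable {M : Type*} [Monoid M]

theorem List.prod_map_mul_eq_mul_prod_map {ι : Type*} (l : List ι) {a b : ι → M} {y : M}
    (h : ∀ i, a i * y = y * b i) : (l.map a).prod * y = y * (l.map b).prod := by
  induction l with
  | nil => simp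
  | cons i l ih =>
    rw [List.map_cons, List.map_cons, List.prod_cons, List.prod_cons, mul_assoc, ih,
      ← mul_assoc, h, mul_assoc]

theorem prod_range_mul_mul_eq_mul_prod_range_succ {f : ℕ → M} {y : M}
    (hcomm : ∀ n, Commute (f 0) (f n)) (hshift : ∀ n, f n * y = y * f (n + 1)) (N : ℕ) :
    ((List.range N).map f).prod * y * f 0 = y * ((List.range (N + 1)).map f).prod := by
  have hf0 : Commute (f 0) ((List.range N).map fun n => f (n + 1)).prod :=
    Commute.list_prod_right _ _ fun _ hz => by
      obtain ⟨n, -, rfl⟩ := List.mem_map.mp hz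
      exact hcomm _
  rw [List.prod_range_succ', List.prod_map_mul_eq_mul_prod_map _ hshift, mul_assoc, ← hf0.eq]

theorem prod_range_succ_mul_eq_mul_mul_prod_range {f : ℕ → M} {y g : M}
    (hshift : ∀ n, f (n + 1) * y = y * f n) (h0 : f 0 * y = y * g) (N : ℕ) :
    ((List.range (N + 1)).map f).prod * y = y * g * ((List.range N).map f).prod := by
  rw [List.prod_range_succ', mul_assoc, List.prod_map_mul_eq_mul_prod_map _ hshift, ← mul_assoc,
    h0]

end Monoid

theorem eq_of_tendsto_of_forall_eq_succ {X Y : Type*} [TopologicalSpace X] [TopologicalSpace Y]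
    [T2Space Y] {u : ℕ → X} {a : X} (hu : Tendsto u atTop (nhds a)) {φ ψ : X → Y}
    (hφ : Continuous φ) (hψ : Continuous ψ) (h : ∀ N, φ (u N) = ψ (u (N + 1))) : φ a = ψ a :=
  tendsto_nhds_unique (((hφ.tendsto a).comp hu).congr h)
    ((hψ.tendsto a).comp (hu.comp (tendsto_add_atTop_nat 1)))

section Ring

variable {A : Type*} [Ring A]

theorem one_add_mul_mul_eq_mul_one_add_mul {c u x y : A} (hc : Commute c y) (hu : Commute u y)
    (h : x * y = u * (y * x)) : (1 + c * x) * y = y * (1 + c * u * x) := by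
  rw [add_mul, mul_add, one_mul, mul_one, mul_assoc c x y, h, ← mul_assoc, ← mul_assoc,
    (hc.mul_left hu).eq, mul_assoc y]

theorem commute_one_add_mul_one_add_mul {c d x : A} (hc : ∀ a, Commute c a)
    (hd : Commute d x) : Commute (1 + c * x) (1 + d * x) :=
  (Commute.one_left _).add_left
    ((Commute.one_right _).add_right ((hc _).mul_left (hd.symm.mul_right (Commute.refl x))))

variable (s : Aˣ) (x : A)

/-- The partial product `(−q^{1/2} x; q)_N` with `s = q^{1/2}`. -/
def qPochhammerPartial (N : ℕ) : A :=
  ((List.range N).map fun n => 1 + ((s ^ (2 * n + 1) : Aˣ) : A) * x).prod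

variable {s x} (hs : ∀ a : A, Commute (↑s) a)
include hs

theorem one_add_zpow_mul_mul_eq {y : A} {m : ℤ} (h : x * y = ↑(s ^ m) * (y * x)) (k : ℤ) :
    (1 + ↑(s ^ k) * x) * y = y * (1 + ↑(s ^ (k + m)) * x) := by
  rw [zpow_add, Units.val_mul]
  exact one_add_mul_mul_eq_mul_one_add_mul ((hs y).units_zpow_left k) ((hs y).units_zpow_left m) h

theorem one_add_pow_mul_mul_eq {y : A} {m : ℤ} (h : x * y = ↑(s ^ m) * (y * x)) {j k : ℕ}
    (hjk : (j : ℤ) + m = k) : (1 + ↑(s ^ j) * x) * y = y * (1 + ↑(s ^ k) * x) := by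
  rw [← zpow_natCast, ← zpow_natCast, ← hjk]
  exact one_add_zpow_mul_mul_eq hs h j

theorem commute_one_add_pow_mul (j k : ℕ) :
    Commute (1 + ↑(s ^ j) * x) (1 + ↑(s ^ k) * x) :=
  commute_one_add_mul_one_add_mul (fun a => (hs a).units_zpow_left j)
    ((hs x).units_zpow_left k)

theorem qPochhammerPartial_mul_mul_one_add {y : A} (h : x * y = ↑(s ^ (2 : ℤ)) * (y * x))
    (N : ℕ) : qPochhammerPartial s x N * y * (1 + ↑s * x) = y * qPochhammerPartial s x (N + 1) := by
  have := prod_range_mul_mul_eq_mul_prod_range_succ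
    (f := fun n => 1 + ((s ^ (2 * n + 1) : Aˣ) : A) * x)
    (fun n => commute_one_add_pow_mul hs _ _)
    (fun n => one_add_pow_mul_mul_eq hs h (by push_cast; ring)) N
  rwa [Nat.mul_zero, zero_add, pow_one] at this

theorem qPochhammerPartial_succ_mul {y : A} (h : x * y = ↑(s ^ (-2 : ℤ)) * (y * x)) (N : ℕ) :
    qPochhammerPartial s x (N + 1) * y = y * (1 + ↑s⁻¹ * x) * qPochhammerPartial s x N := by
  have h0 : (1 + ↑(s ^ (2 * 0 + 1)) * x) * y = y * (1 + ↑s⁻¹ * x) := by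
    simpa using one_add_zpow_mul_mul_eq hs h 1
  exact prod_range_succ_mul_eq_mul_mul_prod_range
    (f := fun n => 1 + ((s ^ (2 * n + 1) : Aˣ) : A) * x)
    (fun n => one_add_pow_mul_mul_eq hs h (by push_cast; ring)) h0 N

variable [TopologicalSpace A] [IsTopologicalRing A] [T2Space A] {P : A}
  (hP : Tendsto (qPochhammerPartial s x) atTop (nhds P))
include hP

theorem mul_mul_one_add_eq_mul_of_tendsto_qPochhammerPartial {y : A}
    (h : x * y = ↑(s ^ (2 : ℤ)) * (y * x)) : P * y * (1 + ↑s * x) = y * P :=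
  eq_of_tendsto_of_forall_eq_succ hP (φ := fun p => p * y * (1 + ↑s * x)) (ψ := fun p => y * p)
    (by fun_prop) (by fun_prop) (qPochhammerPartial_mul_mul_one_add hs h)

theorem mul_eq_mul_one_add_mul_of_tendsto_qPochhammerPartial {y : A}
    (h : x * y = ↑(s ^ (-2 : ℤ)) * (y * x)) : P * y = y * (1 + ↑s⁻¹ * x) * P :=
  (eq_of_tendsto_of_forall_eq_succ hP (φ := fun p => y * (1 + ↑s⁻¹ * x) * p)
    (ψ := fun p => p * y) (by fun_prop) (by fun_prop)
    fun N => (qPochhammerPartial_succ_mul hs h N).symm).symm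

end Ring

/-- Let `x, y` be elements of a topological ring in which
`x y = q^ε y x` with `ε = ±1`, and suppose the `q`-Pochhammer product
`(−q^{1/2} x; q)_∞ = ∏_{n≥0} (1 + q^{n+1/2} x)` converges to an invertible element `P`.
Then `(−q^{1/2} x; q)_∞^{−ε} · y · (−q^{1/2} x; q)_∞^{ε} = y (1 + q^{ε/2} x)`.
Here `s` plays the role of the central invertible element `q^{1/2}`, so
`q^{n+1/2} = s^{2n+1}`, `q^ε = s^{2ε}` and `q^{ε/2} = s^ε`. -/
theorem pochhammer_conjugation
    {A : Type*} [Ring A] [TopologicalSpace A] [IsTopologicalRing A] [T2Space A]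
    (s P : Aˣ) (hs_central : ∀ a : A, Commute (↑s) a)
    (x y : A) (ε : ℤ) (hε : ε = 1 ∨ ε = -1)
    (hcomm : x * y = ((s ^ (2 * ε) : Aˣ) : A) * (y * x))
    (hP : Tendsto (fun N : ℕ => (((List.range N).map (fun n => 1 + ((s ^ (2 * n + 1) : Aˣ) : A) * x)).prod))
      atTop (nhds (P : A))) :
    ((P ^ (-ε) : Aˣ) : A) * y * ((P ^ ε : Aˣ) : A) = y * (1 + ((s ^ ε : Aˣ) : A) * x) := by
  rcases hε with rfl | rfl
  · rw [mul_one] at hcomm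
    have key := mul_mul_one_add_eq_mul_of_tendsto_qPochhammerPartial hs_central hP hcomm
    rw [zpow_neg_one, zpow_one, zpow_one, mul_assoc, ← key, mul_assoc (P : A),
      Units.inv_mul_cancel_left]
  · rw [mul_neg_one] at hcomm
    have key := mul_eq_mul_one_add_mul_of_tendsto_qPochhammerPartial hs_central hP hcomm
    rw [neg_neg, zpow_one, zpow_neg_one, zpow_neg_one, key, Units.mul_inv_cancel_right]
end

section
/- Let E be a finite-dimensional representation of a finite quiver Q over C such that Tr_E(σ) = 0 for every cyclic path σ of positive length in Q. Then E is nilpotent, i.e. every path of length at least ∑_i dim E_i acts by zero on E. -/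
/-!
Let `W = ⨁ₖ V k` and let every path act on `W` through the corresponding block. A product of two
such endomorphisms is either the endomorphism of the concatenated path or zero, so the span `S`
of the positive-length paths is closed under multiplication, and by hypothesis consists of
trace-zero endomorphisms. Thus `tr (x ^ n) = 0` for all `x ∈ S` and `n > 0`; over `ℂ` this forces
`x` to be nilpotent, since the power sums of its nonzero eigenvalues, weighted by multiplicity,
would otherwise contradict the invertibility of a Vandermonde matrix. By Engel's theorem the Lie
algebra `S` then acts nilpotently on `W`. Its lower central series strictly decreases until it
vanishes, hence vanishes after `dim W` steps, and a path of length `n` maps `W` into its `n`-th term.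
-/

open Module

attribute [local instance 100] LieRing.ofAssociativeRing

/-- The linear map `V i →ₗ[ℂ] V j` induced by a path `p : i ⟶ j` in the quiver,
for a representation given by linear maps `f e` attached to the arrows `e`. -/
def pathMap {I : Type*} [Quiver I] (V : I → Type*)
    [∀ i, AddCommGroup (V i)] [∀ i, Module ℂ (V i)]
    (f : ∀ ⦃i j : I⦄, (i ⟶ j) → (V i →ₗ[ℂ] V j)) :
    ∀ {i j : I}, Quiver.Path i j → (V i →ₗ[ℂ] V j)
  | _, _, Quiver.Path.nil => LinearMap.id
  | _, _, Quiver.Path.cons p e => (f e).comp (pathMap V f p)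

theorem Commute.isNilpotent_pow_sub_pow {R : Type*} [Ring R] {a b : R} (hab : Commute a b)
    (h : IsNilpotent (a - b)) (n : ℕ) : IsNilpotent (a ^ n - b ^ n) := by
  rw [← hab.geom_sum₂_mul]
  refine Commute.isNilpotent_mul_left ?_ h
  exact Commute.sum_left _ _ _ fun i _ ↦
    (((Commute.refl a).sub_right hab).pow_left i).mul_left
      ((hab.symm.sub_right (Commute.refl b)).pow_left _)

theorem Finset.eq_zero_of_forall_sum_mul_pow_eq_zero {R : Type*} [CommRing R] [IsDomain R]
    {s : Finset R} {c : R → R} (h : ∀ n : ℕ, ∑ x ∈ s, c x * x ^ n = 0) :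
    ∀ x ∈ s, c x = 0 := by
  intro x hx
  set e := s.equivFin
  have hv := Matrix.eq_zero_of_forall_pow_sum_mul_pow_eq_zero
    (f := fun i ↦ (e.symm i : R)) (v := fun i ↦ c (e.symm i))
    (Subtype.val_injective.comp e.symm.injective) fun n ↦ by
      rw [e.symm.sum_comp (fun y : s ↦ c y * (y : R) ^ (n : ℕ))]
      exact (s.sum_coe_sort fun y ↦ c y * y ^ (n : ℕ)).trans (h n)
  simpa using congrFun hv (e ⟨x, hx⟩)

namespace Module.End

variable {K M : Type*} [Field K] [AddCommGroup M] [Module K M] [FiniteDimensional K M]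

theorem trace_restrict_pow_maxGenEigenspace (f : End K M) (μ : K) (n : ℕ)
    (hf : Set.MapsTo (f ^ n) (f.maxGenEigenspace μ) (f.maxGenEigenspace μ)) :
    LinearMap.trace K _ ((f ^ n).restrict hf) = finrank K (f.maxGenEigenspace μ) * μ ^ n := by
  have hf₁ := mapsTo_maxGenEigenspace_of_comm (Commute.refl f) μ
  set g := f.restrict hf₁
  set c := algebraMap K (End K (f.maxGenEigenspace μ)) μ
  have hg : IsNilpotent (g - c) := f.isNilpotent_restrict_maxGenEigenspace_sub_algebraMap μ
  have hgn : IsNilpotent (g ^ n - c ^ n) :=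
    Commute.isNilpotent_pow_sub_pow (Algebra.commutes μ g).symm hg n
  rw [← pow_restrict n hf₁, ← sub_add_cancel (g ^ n) (c ^ n), map_add,
    (LinearMap.isNilpotent_trace_of_isNilpotent hgn).eq_zero, zero_add, ← map_pow,
    Algebra.algebraMap_eq_smul_one, map_smul, LinearMap.trace_one, smul_eq_mul, mul_comm]

theorem isNilpotent_of_forall_trace_pow_eq_zero [IsAlgClosed K] [CharZero K] (f : End K M)
    (h : ∀ n, 0 < n → LinearMap.trace K M (f ^ n) = 0) : IsNilpotent f := by
  classical
  have hind := f.independent_maxGenEigenspace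
  have htop := iSup_maxGenEigenspace_eq_top f
  have hds := DirectSum.isInternal_submodule_of_iSupIndep_of_iSup_eq_top hind htop
  have hfin := WellFoundedGT.finite_ne_bot_of_iSupIndep hind
  have hsum : ∀ n : ℕ,
      ∑ μ ∈ hfin.toFinset, (finrank K (f.maxGenEigenspace μ) * μ) * μ ^ n = 0 := by
    intro n
    have hmaps := fun μ ↦ mapsTo_maxGenEigenspace_of_comm ((Commute.refl f).pow_right (n + 1)) μ
    rw [← h (n + 1) n.succ_pos, LinearMap.trace_eq_sum_trace_restrict' hds hfin hmaps]
    refine Finset.sum_congr rfl fun μ _ ↦ ?_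
    rw [trace_restrict_pow_maxGenEigenspace]
    ring
  have hzero : ∀ μ, μ ≠ 0 → f.maxGenEigenspace μ = ⊥ := by
    intro μ hμ
    by_contra hne
    have := Finset.eq_zero_of_forall_sum_mul_pow_eq_zero hsum μ (by simpa using hne)
    rw [mul_eq_zero, Nat.cast_eq_zero, Submodule.finrank_eq_zero, or_iff_left hμ] at this
    exact hne this
  have hzero_top : f.maxGenEigenspace 0 = ⊤ := by
    rw [eq_top_iff, ← htop]
    refine iSup_le fun μ ↦ ?_
    rcases eq_or_ne μ 0 with rfl | hμ
    · exact le_rfl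
    · simp [hzero μ hμ]
  refine ((LinearMap.charpoly_nilpotent_tfae f).out 2 0).mp fun m ↦ ?_
  obtain ⟨k, hk⟩ := (mem_maxGenEigenspace f 0 m).mp (hzero_top ▸ Submodule.mem_top)
  exact ⟨k, by simpa using hk⟩

end Module.End

namespace LieModule

section CommRing

variable (R L M : Type*) [CommRing R] [LieRing L] [LieAlgebra R L] [AddCommGroup M] [Module R M]
  [LieRingModule L M] [LieModule R L M] [IsNilpotent L M]

theorem lowerCentralSeries_succ_lt {n : ℕ} (hn : lowerCentralSeries R L M n ≠ ⊥) :
    lowerCentralSeries R L M (n + 1) < lowerCentralSeries R L M n := by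
  refine (antitone_lowerCentralSeries R L M n.le_succ).lt_of_ne fun hstable ↦ hn ?_
  have hconst : ∀ d, lowerCentralSeries R L M (n + d) = lowerCentralSeries R L M n := by
    intro d
    induction d with
    | zero => rfl
    | succ d ih => rw [← add_assoc, lowerCentralSeries_succ, ih, ← lowerCentralSeries_succ, hstable]
  obtain ⟨k, hk⟩ := IsNilpotent.nilpotent R L M
  rw [eq_bot_iff, ← hk, ← hconst k]
  exact antitone_lowerCentralSeries R L M (Nat.le_add_left k n)

end CommRing

section Field

variable (K L M : Type*) [Field K] [LieRing L] [LieAlgebra K L] [AddCommGroup M] [Module K M]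
  [LieRingModule L M] [LieModule K L M] [IsNilpotent L M] [FiniteDimensional K M]

theorem finrank_lowerCentralSeries_le (n : ℕ) :
    finrank K (lowerCentralSeries K L M n : Submodule K M) ≤ finrank K M - n := by
  induction n with
  | zero => rw [lowerCentralSeries_zero, LieSubmodule.top_toSubmodule, finrank_top, Nat.sub_zero]
  | succ n ih =>
    by_cases hn : lowerCentralSeries K L M n = ⊥
    · have hsucc : lowerCentralSeries K L M (n + 1) = ⊥ :=
        eq_bot_iff.mpr (hn ▸ antitone_lowerCentralSeries K L M n.le_succ)
      rw [hsucc, LieSubmodule.bot_toSubmodule, finrank_bot]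
      exact Nat.zero_le _
    · have := Submodule.finrank_lt_finrank_of_lt (lowerCentralSeries_succ_lt K L M hn)
      omega

theorem lowerCentralSeries_eq_bot_of_finrank_le {n : ℕ} (hn : finrank K M ≤ n) :
    lowerCentralSeries K L M n = ⊥ := by
  have h := finrank_lowerCentralSeries_le K L M n
  rwa [Nat.sub_eq_zero_of_le hn, Nat.le_zero, Submodule.finrank_eq_zero,
    LieSubmodule.toSubmodule_eq_bot] at h

end Field

end LieModule

section QuiverRepresentation

variable {I : Type*} [Quiver I] (V : I → Type*) [∀ i, AddCommGroup (V i)] [∀ i, Module ℂ (V i)]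
  (f : ∀ ⦃i j : I⦄, (i ⟶ j) → (V i →ₗ[ℂ] V j))

theorem pathMap_comp {i j k : I} (p : Quiver.Path i j) (q : Quiver.Path j k) :
    pathMap V f (p.comp q) = (pathMap V f q).comp (pathMap V f p) := by
  induction q with
  | nil => rw [Quiver.Path.comp_nil, pathMap, LinearMap.id_comp]
  | cons q e ih => simp only [Quiver.Path.comp_cons, pathMap, ih, LinearMap.comp_assoc]

variable [DecidableEq I]

def pathEnd {i j : I} (p : Quiver.Path i j) : End ℂ (∀ k, V k) :=
  LinearMap.single ℂ V j ∘ₗ pathMap V f p ∘ₗ LinearMap.proj i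

theorem pathEnd_single {i j : I} (p : Quiver.Path i j) (v : V i) :
    pathEnd V f p (Pi.single i v) = Pi.single j (pathMap V f p v) := by
  simp [pathEnd]

theorem pathEnd_eq_zero_iff {i j : I} (p : Quiver.Path i j) :
    pathEnd V f p = 0 ↔ pathMap V f p = 0 := by
  refine ⟨fun h ↦ LinearMap.ext fun v ↦ Pi.single_injective j ?_, fun h ↦ by
    simp [pathEnd, h]⟩
  simpa [pathEnd_single] using LinearMap.congr_fun h (Pi.single i v)

theorem pathEnd_comp {i j k : I} (p : Quiver.Path i j) (q : Quiver.Path j k) :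
    pathEnd V f (p.comp q) = pathEnd V f q * pathEnd V f p := by
  ext
  simp [pathEnd, pathMap_comp]

theorem pathEnd_mul_eq_zero {i j k l : I} (p : Quiver.Path i j) (q : Quiver.Path k l)
    (h : j ≠ k) : pathEnd V f q * pathEnd V f p = 0 := by
  ext
  simp [pathEnd, Pi.single_eq_of_ne' h]

def pathSpan : Submodule ℂ (End ℂ (∀ k, V k)) :=
  Submodule.span ℂ {x | ∃ (i j : I) (p : Quiver.Path i j), 0 < p.length ∧ pathEnd V f p = x}

theorem pathEnd_mem_pathSpan {i j : I} (p : Quiver.Path i j) (hp : 0 < p.length) :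
    pathEnd V f p ∈ pathSpan V f :=
  Submodule.subset_span ⟨i, j, p, hp, rfl⟩

theorem mul_mem_pathSpan {x y : End ℂ (∀ k, V k)} (hx : x ∈ pathSpan V f)
    (hy : y ∈ pathSpan V f) : x * y ∈ pathSpan V f := by
  suffices pathSpan V f * pathSpan V f ≤ pathSpan V f from this (Submodule.mul_mem_mul hx hy)
  rw [pathSpan, Submodule.span_mul_span, Submodule.span_le]
  rintro _ ⟨_, ⟨i, j, p, hp, rfl⟩, _, ⟨k, l, q, hq, rfl⟩, rfl⟩
  dsimp only
  by_cases h : l = i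
  · subst h
    rw [← pathEnd_comp]
    exact pathEnd_mem_pathSpan V f _ (by rw [Quiver.Path.length_comp]; omega)
  · rw [pathEnd_mul_eq_zero V f q p h]
    exact zero_mem _

theorem pow_mem_pathSpan {x : End ℂ (∀ k, V k)} (hx : x ∈ pathSpan V f) {n : ℕ} (hn : 0 < n) :
    x ^ n ∈ pathSpan V f := by
  induction n, hn using Nat.le_induction with
  | base => rwa [pow_one]
  | succ n _ ih => rw [pow_succ]; exact mul_mem_pathSpan V f ih hx

def pathLieSubalgebra : LieSubalgebra ℂ (End ℂ (∀ k, V k)) where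
  __ := pathSpan V f
  lie_mem' {x y} hx hy := by
    rw [Ring.lie_def]
    exact sub_mem (mul_mem_pathSpan V f hx hy) (mul_mem_pathSpan V f hy hx)

theorem pathEnd_apply_mem_lowerCentralSeries {i j : I} (p : Quiver.Path i j) (w : ∀ k, V k) :
    pathEnd V f p w ∈ LieModule.lowerCentralSeries ℂ (pathLieSubalgebra V f) _ p.length := by
  induction p with
  | nil => exact LieSubmodule.mem_top _
  | cons q e ih =>
    let a : pathLieSubalgebra V f := ⟨pathEnd V f e.toPath, pathEnd_mem_pathSpan V f _ Nat.one_pos⟩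
    have h : pathEnd V f (q.cons e) w = ⁅a, pathEnd V f q w⁆ := by
      rw [← Quiver.Path.comp_toPath_eq_cons, pathEnd_comp]
      rfl
    rw [h, Quiver.Path.length_cons, LieModule.lowerCentralSeries_succ]
    exact LieSubmodule.lie_mem_lie (LieSubmodule.mem_top a) ih

variable [Fintype I] [∀ i, FiniteDimensional ℂ (V i)]

theorem trace_pathEnd {i : I} (p : Quiver.Path i i) :
    LinearMap.trace ℂ _ (pathEnd V f p) = LinearMap.trace ℂ _ (pathMap V f p) := by
  rw [pathEnd, LinearMap.trace_comp_comm', LinearMap.comp_assoc,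
    LinearMap.proj_comp_single_same, LinearMap.comp_id]

theorem trace_pathEnd_of_ne {i j : I} (p : Quiver.Path i j) (h : i ≠ j) :
    LinearMap.trace ℂ _ (pathEnd V f p) = 0 := by
  rw [pathEnd, LinearMap.trace_comp_comm', LinearMap.comp_assoc,
    LinearMap.proj_comp_single_ne ℂ V i j h, LinearMap.comp_zero, map_zero]

theorem trace_eq_zero_of_mem_pathSpan
    (htr : ∀ (i : I) (p : Quiver.Path i i), 0 < p.length →
      LinearMap.trace ℂ (V i) (pathMap V f p) = 0)
    {x : End ℂ (∀ k, V k)} (hx : x ∈ pathSpan V f) :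
    LinearMap.trace ℂ _ x = 0 := by
  suffices pathSpan V f ≤ LinearMap.ker (LinearMap.trace ℂ _) from this hx
  rw [pathSpan, Submodule.span_le]
  rintro _ ⟨i, j, p, hp, rfl⟩
  by_cases h : i = j
  · subst h
    exact (trace_pathEnd V f p).trans (htr i p hp)
  · exact trace_pathEnd_of_ne V f p h

theorem isNilpotent_pathLieSubalgebra
    (htr : ∀ (i : I) (p : Quiver.Path i i), 0 < p.length →
      LinearMap.trace ℂ (V i) (pathMap V f p) = 0) :
    LieModule.IsNilpotent (pathLieSubalgebra V f) (∀ k, V k) :=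
  (LieModule.isNilpotent_iff_forall' (R := ℂ)).mpr fun x ↦
    Module.End.isNilpotent_of_forall_trace_pow_eq_zero _ fun _ hn ↦
      trace_eq_zero_of_mem_pathSpan V f htr (pow_mem_pathSpan V f x.2 hn)

end QuiverRepresentation

/-- Let `E = (V, f)` be a finite-dimensional representation of a finite
quiver `Q` over `ℂ` such that `Tr_E(σ) = 0` for every cyclic path `σ` of positive
length.  Then `E` is nilpotent: every path of length at least `∑ᵢ dim Eᵢ` acts by
zero on `E`. -/
theorem trace_zero_on_cycles_implies_nilpotent
    {I : Type*} [Quiver I] [Fintype I] [∀ i j : I, Fintype (i ⟶ j)]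
    (V : I → Type*) [∀ i, AddCommGroup (V i)] [∀ i, Module ℂ (V i)]
    [∀ i, FiniteDimensional ℂ (V i)]
    (f : ∀ ⦃i j : I⦄, (i ⟶ j) → (V i →ₗ[ℂ] V j))
    (htr : ∀ (i : I) (p : Quiver.Path i i), 0 < p.length →
      LinearMap.trace ℂ (V i) (pathMap V f p) = 0) :
    ∀ (i j : I) (p : Quiver.Path i j),
      (∑ k : I, Module.finrank ℂ (V k)) ≤ p.length → pathMap V f p = 0 := by
  classical
  intro i j p hp
  have := isNilpotent_pathLieSubalgebra V f htr
  have hbot := LieModule.lowerCentralSeries_eq_bot_of_finrank_le ℂ (pathLieSubalgebra V f)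
    (∀ k, V k) (n := p.length) (by rwa [finrank_pi_fintype])
  rw [← pathEnd_eq_zero_iff]
  refine LinearMap.ext fun w ↦ ?_
  simpa [hbot] using pathEnd_apply_mem_lowerCentralSeries V f p w
end

section
/- Every nonzero finite-dimensional representation E of a finite quiver Q admits a unique Harder–Narasimhan filtration with respect to a central charge Z: an increasing filtration 0 = E_0 ⊂ E_1 ⊂ ⋯ ⊂ E_n = E such that each subquotient E_i/E_{i−1} is semistable and the slopes φ(E_1) > φ(E_2/E_1) > ⋯ > φ(E_n/E_{n−1}) strictly decrease. -/
section QuiverRep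

variable {I : Type*} [Quiver I] (V : I → Type*)
  [∀ i, AddCommGroup (V i)] [∀ i, Module ℂ (V i)]

/-- A family of subspaces `p i ⊆ V i` is a subrepresentation if it is preserved by
all the structure maps of the representation. -/
def IsSubrep (f : ∀ ⦃i j : I⦄, (i ⟶ j) → (V i →ₗ[ℂ] V j))
    (p : ∀ i, Submodule ℂ (V i)) : Prop :=
  ∀ ⦃i j : I⦄ (e : i ⟶ j), ∀ x ∈ p i, f e x ∈ p j

/-- The dimension vector of the subquotient `q/p` of a nested pair of families of
subspaces `p ≤ q`. -/
noncomputable def dimVecBetween (p q : ∀ i, Submodule ℂ (V i)) : I → ℤ :=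
  fun i => (Module.finrank ℂ (q i) : ℤ) - (Module.finrank ℂ (p i) : ℤ)

/-- The subquotient `q/p` (with `p ≤ q` nested subrepresentations) is semistable
with respect to the central charge `Z`: every nonzero subrepresentation `r/p` of
`q/p` (corresponding to a subrepresentation `p ≤ r ≤ q`) has slope
`Arg Z(dim r/p) ≤ Arg Z(dim q/p)`. -/
def SemistableBetween (f : ∀ ⦃i j : I⦄, (i ⟶ j) → (V i →ₗ[ℂ] V j))
    (Z : (I → ℤ) →ₗ[ℤ] ℂ) (p q : ∀ i, Submodule ℂ (V i)) : Prop :=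
  ∀ r : ∀ i, Submodule ℂ (V i), IsSubrep V f r →
    (∀ i, p i ≤ r i) → (∀ i, r i ≤ q i) → r ≠ p →
    Complex.arg (Z (dimVecBetween V p r)) ≤ Complex.arg (Z (dimVecBetween V p q))

/-- `E : ℕ → (∀ i, Submodule ℂ (V i))` (constant equal to `⊤` from index `n` on) is a
Harder–Narasimhan filtration of length `n` of the representation `(V, f)` with
respect to the central charge `Z`: an increasing filtration by subrepresentations
`0 = E 0 ⊆ E 1 ⊆ ⋯ ⊆ E n = V` with semistable subquotients of strictly decreasing
slopes. -/
def IsHNFiltration (f : ∀ ⦃i j : I⦄, (i ⟶ j) → (V i →ₗ[ℂ] V j))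
    (Z : (I → ℤ) →ₗ[ℤ] ℂ) (n : ℕ) (E : ℕ → ∀ i, Submodule ℂ (V i)) : Prop :=
  (∀ k, IsSubrep V f (E k)) ∧
  (E 0 = fun _ => ⊥) ∧
  (∀ k, n ≤ k → E k = fun _ => ⊤) ∧
  (∀ k, k < n → ∀ i, E k i ≤ E (k + 1) i) ∧
  (∀ k, k < n → E k ≠ E (k + 1)) ∧
  (∀ k, k < n → SemistableBetween V f Z (E k) (E (k + 1))) ∧
  (∀ k, k + 1 < n →
    Complex.arg (Z (dimVecBetween V (E (k + 1)) (E (k + 2)))) <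
      Complex.arg (Z (dimVecBetween V (E k) (E (k + 1)))))

end QuiverRep

/-!
Work in a sublattice `S` of subobjects (for a quiver representation: the subrepresentations
among all families of subspaces) with a charge `z` such that
`z (a ⊔ b) + z (a ⊓ b) = z a + z b` and `z b - z a` lies in the upper half plane when `a < b`;
`phase z a b` is the phase of the subquotient `b / a`. For `a < b < c` the phase of `c / a`
lies between those of `b / a` and `c / b` (seesaw), and modularity gives `(r ⊔ b) / b` the
phase of `r / (r ⊓ b)`.

Above every `a ≠ ⊤` there is a maximal destabilizing subobject, the greatest `b > a` of maximal
phase: phases take finitely many values, and by the seesaw and modularity the join of two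
subobjects of maximal phase again has maximal phase. Conversely, the first step `E 1` of any
HN filtration from `a` is this subobject: if `r` is not below `E 1`, then `r / (r ⊓ E 1)` has
the phase of `(r ⊔ E 1) / E 1`, which by induction on the length is at most that of
`E 2 / E 1`, hence below that of `E 1 / a`. Existence follows by downward well-founded
induction (`im ∘ z` is strictly monotone with finitely many values), uniqueness by induction
on the length.
-/

namespace Complex

theorem arg_le_arg_iff_of_im_pos {u v : ℂ} (hu : 0 < u.im) (hv : 0 < v.im) :
    arg u ≤ arg v ↔ u.im * v.re ≤ u.re * v.im := by
  have cross : u.re * v.im - u.im * v.re = ‖u‖ * ‖v‖ * Real.sin (arg v - arg u) := by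
    rw [Real.sin_sub, ← norm_mul_cos_arg u, ← norm_mul_sin_arg u, ← norm_mul_cos_arg v,
      ← norm_mul_sin_arg v]
    ring
  have hnorm : 0 < ‖u‖ * ‖v‖ := by
    have := norm_pos_iff.2 (ne_of_apply_ne im hu.ne')
    have := norm_pos_iff.2 (ne_of_apply_ne im hv.ne')
    positivity
  have hu₀ := arg_nonneg_iff.2 hu.le
  have hv₀ := arg_nonneg_iff.2 hv.le
  have huπ := arg_lt_pi_iff.2 (Or.inr hu.ne')
  have hvπ := arg_lt_pi_iff.2 (Or.inr hv.ne')
  rw [← sub_nonneg (b := u.im * v.re), cross]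
  constructor
  · intro h
    exact mul_nonneg hnorm.le (Real.sin_nonneg_of_nonneg_of_le_pi (by linarith) (by linarith))
  · intro h
    by_contra! hlt
    have := Real.sin_neg_of_neg_of_neg_pi_lt (x := arg v - arg u) (by linarith) (by linarith)
    nlinarith

theorem arg_le_arg_add_iff {u v : ℂ} (hu : 0 < u.im) (hv : 0 < v.im) :
    arg u ≤ arg (u + v) ↔ arg u ≤ arg v := by
  rw [arg_le_arg_iff_of_im_pos hu (by simpa using add_pos hu hv),
    arg_le_arg_iff_of_im_pos hu hv, add_re, add_im]
  constructor <;> intro h <;> linarith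

theorem arg_add_le_arg_iff {u v : ℂ} (hu : 0 < u.im) (hv : 0 < v.im) :
    arg (u + v) ≤ arg v ↔ arg u ≤ arg v := by
  rw [arg_le_arg_iff_of_im_pos (by simpa using add_pos hu hv) hv,
    arg_le_arg_iff_of_im_pos hu hv, add_re, add_im]
  constructor <;> intro h <;> linarith

end Complex

namespace HarderNarasimhan

open Complex

variable {α : Type*} [Lattice α]

structure IsCentralCharge (z : α → ℂ) : Prop where
  map_sup_add_map_inf (a b : α) : z (a ⊔ b) + z (a ⊓ b) = z a + z b
  im_sub_pos {a b : α} : a < b → 0 < (z b - z a).im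
  finite_range : (Set.range z).Finite

noncomputable def phase (z : α → ℂ) (a b : α) : ℝ := arg (z b - z a)

variable {S : Sublattice α} {z : α → ℂ} {a b c : α}

namespace IsCentralCharge

theorem phase_le_phase_left_iff (hz : IsCentralCharge z) (hab : a < b) (hbc : b < c) :
    phase z a b ≤ phase z a c ↔ phase z a b ≤ phase z b c := by
  have := arg_le_arg_add_iff (hz.im_sub_pos hab) (hz.im_sub_pos hbc)
  rwa [sub_add_sub_cancel'] at this

theorem phase_le_phase_right_iff (hz : IsCentralCharge z) (hab : a < b) (hbc : b < c) :
    phase z a c ≤ phase z b c ↔ phase z a b ≤ phase z b c := by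
  have := arg_add_le_arg_iff (hz.im_sub_pos hab) (hz.im_sub_pos hbc)
  rwa [sub_add_sub_cancel'] at this

theorem phase_sup_eq (hz : IsCentralCharge z) (a b : α) :
    phase z b (a ⊔ b) = phase z (a ⊓ b) a := by
  unfold phase
  congr 1
  linear_combination hz.map_sup_add_map_inf a b

theorem wellFoundedGT (hz : IsCentralCharge z) : WellFoundedGT α := by
  have hwf : WellFounded (Function.onFun (· > ·) fun a => (z a).im) := by
    rw [← Set.wellFoundedOn_univ, ← Set.wellFoundedOn_image, Set.image_univ, Set.range_comp']
    exact (hz.finite_range.image im).wellFoundedOn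
  exact ⟨Subrelation.wf (fun h => by simpa using hz.im_sub_pos h) hwf⟩

end IsCentralCharge

variable (S z)

def IsSemistable (a b : α) : Prop :=
  ∀ r ∈ S, a < r → r ≤ b → phase z a r ≤ phase z a b

structure IsMaxDestabilizing (a b : α) : Prop where
  mem : b ∈ S
  lt : a < b
  phase_le : ∀ r ∈ S, a < r → phase z a r ≤ phase z a b
  le_of_phase_le : ∀ r ∈ S, a < r → phase z a b ≤ phase z a r → r ≤ b

variable {S z}

namespace IsMaxDestabilizing

theorem isSemistable (h : IsMaxDestabilizing S z a b) : IsSemistable S z a b :=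
  fun r hr har _ => h.phase_le r hr har

theorem unique {b' : α} (h : IsMaxDestabilizing S z a b) (h' : IsMaxDestabilizing S z a b') :
    b = b' :=
  le_antisymm (h'.le_of_phase_le b h.mem h.lt (h.phase_le b' h'.mem h'.lt))
    (h.le_of_phase_le b' h'.mem h'.lt (h'.phase_le b h.mem h.lt))

theorem phase_lt (hz : IsCentralCharge z) (h : IsMaxDestabilizing S z a b) (hc : c ∈ S)
    (hbc : b < c) : phase z b c < phase z a b := by
  by_contra! hle
  exact hbc.not_ge <| h.le_of_phase_le c hc (h.lt.trans hbc)
    ((hz.phase_le_phase_left_iff h.lt hbc).2 hle)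

end IsMaxDestabilizing

namespace IsCentralCharge

theorem phase_le_phase_sup (hz : IsCentralCharge z) {r : α} (hr : r ∈ S) (hb : b ∈ S)
    (hab : a < b) (hmax : ∀ s ∈ S, a < s → phase z a s ≤ phase z a b)
    (har : a < r) (hbr : phase z a b ≤ phase z a r) :
    phase z a b ≤ phase z a (r ⊔ b) := by
  rcases (le_sup_right : b ≤ r ⊔ b).eq_or_lt with heq | hlt
  · rw [← heq]
  have hinf : phase z a r ≤ phase z (r ⊓ b) r := by
    rcases (le_inf har.le hab.le : a ≤ r ⊓ b).eq_or_lt with rfl | ha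
    · exact le_rfl
    have hm : r ⊓ b < r := inf_lt_left.2 fun h => hlt.ne (sup_eq_right.2 h).symm
    rw [hz.phase_le_phase_right_iff ha hm, ← hz.phase_le_phase_left_iff ha hm]
    exact (hmax _ (S.inf_mem hr hb) ha).trans hbr
  exact (hz.phase_le_phase_left_iff hab hlt).2 (hbr.trans (hinf.trans (hz.phase_sup_eq r b).ge))

theorem exists_isMaxDestabilizing [OrderTop α] (hz : IsCentralCharge z)
    (htop : ⊤ ∈ S) (ha : a < ⊤) : ∃ b, IsMaxDestabilizing S z a b := by
  obtain ⟨_, ⟨b₀, ⟨hb₀, hab₀⟩, rfl⟩, hmax₀⟩ :=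
    Set.exists_max_image (z '' {r | r ∈ S ∧ a < r}) (fun w => arg (w - z a))
      (hz.finite_range.subset (Set.image_subset_range _ _)) ⟨_, ⊤, ⟨htop, ha⟩, rfl⟩
  -- among the subobjects of maximal phase, take one with `(z b).im` maximal
  obtain ⟨_, ⟨b, ⟨hb, hab, hbb₀⟩, rfl⟩, hmax⟩ :=
    Set.exists_max_image (z '' {r | r ∈ S ∧ a < r ∧ phase z a b₀ ≤ phase z a r}) im
      (hz.finite_range.subset (Set.image_subset_range _ _)) ⟨_, b₀, ⟨hb₀, hab₀, le_rfl⟩, rfl⟩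
  have hphase_le : ∀ r ∈ S, a < r → phase z a r ≤ phase z a b :=
    fun r hr har => (hmax₀ _ ⟨r, ⟨hr, har⟩, rfl⟩).trans hbb₀
  refine ⟨b, hb, hab, hphase_le, fun r hr har hbr => ?_⟩
  have hsup := hz.phase_le_phase_sup hr hb hab hphase_le har hbr
  have him := hmax _ ⟨r ⊔ b, ⟨S.sup_mem hr hb, har.trans_le le_sup_left, hbb₀.trans hsup⟩, rfl⟩
  rcases (le_sup_right : b ≤ r ⊔ b).eq_or_lt with heq | hlt
  · exact heq ▸ le_sup_left
  · linarith [hz.im_sub_pos hlt, sub_im (z (r ⊔ b)) (z b)]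

end IsCentralCharge

variable [OrderTop α]

variable (S z) in
/-- A Harder–Narasimhan filtration of `⊤ / a`; `IsHNFiltration` is the case `a = ⊥`. -/
structure IsHNFiltrationFrom (a : α) (n : ℕ) (E : ℕ → α) : Prop where
  mem : ∀ k, E k ∈ S
  zero : E 0 = a
  eq_top : ∀ k, n ≤ k → E k = ⊤
  lt_succ : ∀ k < n, E k < E (k + 1)
  isSemistable : ∀ k < n, IsSemistable S z (E k) (E (k + 1))
  phase_lt : ∀ k, k + 1 < n → phase z (E (k + 1)) (E (k + 2)) < phase z (E k) (E (k + 1))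

namespace IsHNFiltrationFrom

variable {n m : ℕ} {E E' : ℕ → α}

theorem top (htop : ⊤ ∈ S) : IsHNFiltrationFrom S z ⊤ 0 fun _ => ⊤ where
  mem _ := htop
  zero := rfl
  eq_top _ _ := rfl
  lt_succ k hk := absurd hk k.not_lt_zero
  isSemistable k hk := absurd hk k.not_lt_zero
  phase_lt _ hk := absurd hk (Nat.not_lt_zero _)

theorem length_eq_zero_iff (h : IsHNFiltrationFrom S z a n E) : n = 0 ↔ a = ⊤ := by
  refine ⟨fun hn => h.zero.symm.trans (h.eq_top 0 hn.le), fun ha => ?_⟩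
  by_contra hn
  exact not_top_lt (ha ▸ h.zero ▸ h.lt_succ 0 (Nat.pos_of_ne_zero hn))

theorem tail (h : IsHNFiltrationFrom S z a (n + 1) E) :
    IsHNFiltrationFrom S z (E 1) n fun k => E (k + 1) where
  mem k := h.mem (k + 1)
  zero := rfl
  eq_top k hk := h.eq_top (k + 1) (by omega)
  lt_succ k hk := h.lt_succ (k + 1) (by omega)
  isSemistable k hk := h.isSemistable (k + 1) (by omega)
  phase_lt k hk := h.phase_lt (k + 1) (by omega)

theorem cons (hz : IsCentralCharge z) (ha : a ∈ S) (hb : IsMaxDestabilizing S z a b)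
    (h : IsHNFiltrationFrom S z b n E) :
    IsHNFiltrationFrom S z a (n + 1) fun | 0 => a | k + 1 => E k where
  mem | 0 => ha | k + 1 => h.mem k
  zero := rfl
  eq_top
    | 0, hk => absurd hk (by omega)
    | k + 1, hk => h.eq_top k (by omega)
  lt_succ
    | 0, _ => show a < E 0 from h.zero ▸ hb.lt
    | k + 1, hk => h.lt_succ k (by omega)
  isSemistable
    | 0, _ => show IsSemistable S z a (E 0) from h.zero ▸ hb.isSemistable
    | k + 1, hk => h.isSemistable k (by omega)
  phase_lt
    | 0, hk => show phase z (E 0) (E 1) < phase z a (E 0) from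
        h.zero ▸ hb.phase_lt hz (h.mem 1) (h.zero ▸ h.lt_succ 0 (by omega))
    | k + 1, hk => h.phase_lt k (by omega)


theorem isMaxDestabilizing (hz : IsCentralCharge z) (h : IsHNFiltrationFrom S z a n E)
    (hn : 0 < n) : IsMaxDestabilizing S z a (E 1) := by
  induction n generalizing a E with
  | zero => omega
  | succ n ih =>
  have hlt : a < E 1 := h.zero ▸ h.lt_succ 0 hn
  have hss : IsSemistable S z a (E 1) := h.zero ▸ h.isSemistable 0 hn
  have hphase_lt : ∀ r ∈ S, a < r → ¬r ≤ E 1 → phase z a r < phase z a (E 1) := by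
    intro r hr har hr1
    have hn : 0 < n := Nat.pos_of_ne_zero fun hn => hr1 (h.eq_top 1 (by omega) ▸ le_top)
    have hquot : phase z (r ⊓ E 1) r < phase z a (E 1) := by
      rw [← hz.phase_sup_eq]
      calc phase z (E 1) (r ⊔ E 1)
          ≤ phase z (E 1) (E 2) :=
            (ih h.tail hn).phase_le _ (S.sup_mem hr (h.mem 1)) (right_lt_sup.2 hr1)
        _ < phase z a (E 1) := h.zero ▸ h.phase_lt 0 (by omega)
    rcases (le_inf har.le hlt.le : a ≤ r ⊓ E 1).eq_or_lt with heq | ha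
    · exact (congrArg (phase z · r) heq).trans_lt hquot
    have hm : r ⊓ E 1 < r := inf_lt_left.2 hr1
    have hsub := hss _ (S.inf_mem hr (h.mem 1)) ha inf_le_right
    by_contra! hge
    have := (hz.phase_le_phase_right_iff ha hm).2
      ((hz.phase_le_phase_left_iff ha hm).1 (hsub.trans hge))
    linarith
  refine ⟨h.mem 1, hlt, fun r hr har => ?_, fun r hr har hle => ?_⟩
  · by_cases hr1 : r ≤ E 1
    · exact hss r hr har hr1
    · exact (hphase_lt r hr har hr1).le
  · by_contra hr1
    exact (hphase_lt r hr har hr1).not_ge hle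

theorem unique (hz : IsCentralCharge z) (h : IsHNFiltrationFrom S z a n E)
    (h' : IsHNFiltrationFrom S z a m E') : n = m ∧ E = E' := by
  induction n generalizing a m E E' with
  | zero =>
    obtain rfl : m = 0 := h'.length_eq_zero_iff.2 (h.length_eq_zero_iff.1 rfl)
    exact ⟨rfl, funext fun k => (h.eq_top k k.zero_le).trans (h'.eq_top k k.zero_le).symm⟩
  | succ n ih =>
    obtain ⟨m, rfl⟩ := Nat.exists_eq_succ_of_ne_zero
      (mt h'.length_eq_zero_iff.1 (mt h.length_eq_zero_iff.2 n.succ_ne_zero))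
    have h1 : E 1 = E' 1 :=
      (h.isMaxDestabilizing hz n.succ_pos).unique (h'.isMaxDestabilizing hz m.succ_pos)
    have h'' : IsHNFiltrationFrom S z (E 1) m fun k => E' (k + 1) := h1 ▸ h'.tail
    obtain ⟨rfl, htail⟩ := ih h.tail h''
    exact ⟨rfl, funext fun | 0 => h.zero.trans h'.zero.symm | k + 1 => congrFun htail k⟩

end IsHNFiltrationFrom

namespace IsCentralCharge

theorem exists_isHNFiltrationFrom (hz : IsCentralCharge z) (htop : ⊤ ∈ S)
    (ha : a ∈ S) : ∃ n E, IsHNFiltrationFrom S z a n E := by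
  have := hz.wellFoundedGT
  induction a using WellFoundedGT.induction with
  | _ a ih =>
  rcases (le_top : a ≤ ⊤).eq_or_lt with rfl | hlt
  · exact ⟨0, _, .top htop⟩
  obtain ⟨b, hb⟩ := hz.exists_isMaxDestabilizing htop hlt
  obtain ⟨n, E, hE⟩ := ih b hb.lt hb.mem
  exact ⟨n + 1, _, hE.cons hz ha hb⟩

theorem existsUnique_isHNFiltrationFrom (hz : IsCentralCharge z)
    (htop : ⊤ ∈ S) (ha : a ∈ S) : ∃! F : ℕ × (ℕ → α), IsHNFiltrationFrom S z a F.1 F.2 := by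
  obtain ⟨n, E, hE⟩ := hz.exists_isHNFiltrationFrom htop ha
  refine ⟨(n, E), hE, fun F hF => ?_⟩
  obtain ⟨hn, hE'⟩ := hF.unique hz hE
  exact Prod.ext hn hE'

end IsCentralCharge

end HarderNarasimhan

open HarderNarasimhan

section QuiverRepresentation

variable {I : Type*} (V : I → Type*) [∀ i, AddCommGroup (V i)] [∀ i, Module ℂ (V i)]

noncomputable def dimVec (p : ∀ i, Submodule ℂ (V i)) : I → ℤ :=
  fun i => Module.finrank ℂ (p i)

theorem LinearMap.im_apply_pos [Fintype I] [DecidableEq I] {Z : (I → ℤ) →ₗ[ℤ] ℂ}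
    (hZ : ∀ i : I, 0 < (Z (Pi.single i 1)).im) {m : I → ℤ} (hm : 0 ≤ m) (hm₀ : m ≠ 0) :
    0 < (Z m).im := by
  have hZm : Z m = ∑ i, (m i : ℂ) * Z (Pi.single i 1) := by
    conv_lhs => rw [← Finset.univ_sum_single m]
    refine (map_sum Z _ _).trans (Finset.sum_congr rfl fun i _ => ?_)
    rw [← zsmul_eq_mul, ← map_zsmul, ← Pi.single_smul, smul_eq_mul, mul_one]
  obtain ⟨i, hi⟩ : ∃ i, m i ≠ 0 := Function.ne_iff.1 hm₀
  rw [hZm, Complex.im_sum]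
  simp only [Complex.mul_im, Complex.intCast_re, Complex.intCast_im, zero_mul, add_zero]
  exact Finset.sum_pos' (fun j _ => mul_nonneg (Int.cast_nonneg (hm j)) (hZ j).le)
    ⟨i, Finset.mem_univ _, mul_pos (Int.cast_pos.2 ((hm i).lt_of_ne' hi)) (hZ i)⟩

theorem isCentralCharge_comp_dimVec [Fintype I] [DecidableEq I]
    [∀ i, FiniteDimensional ℂ (V i)] {Z : (I → ℤ) →ₗ[ℤ] ℂ}
    (hZ : ∀ i : I, 0 < (Z (Pi.single i 1)).im) : IsCentralCharge (Z ∘ dimVec V) where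
  map_sup_add_map_inf p q := by
    simp only [Function.comp_apply, ← map_add]
    congr 1
    funext i
    simp only [dimVec, Pi.add_apply]
    exact_mod_cast Submodule.finrank_sup_add_finrank_inf_eq (p i) (q i)
  im_sub_pos {p q} hpq := by
    obtain ⟨hle, i, hi⟩ := Pi.lt_def.1 hpq
    rw [Function.comp_apply, Function.comp_apply, ← map_sub]
    refine LinearMap.im_apply_pos hZ
      (fun j => sub_nonneg.2 (Int.ofNat_le.2 (Submodule.finrank_mono (hle j)))) fun h₀ => ?_
    exact (Submodule.finrank_lt_finrank_of_lt hi).ne'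
      (Int.ofNat_inj.1 (sub_eq_zero.1 (congrFun h₀ i)))
  finite_range := by
    refine ((Set.finite_Icc (0 : I → ℤ) fun i => (Module.finrank ℂ (V i) : ℤ)).image Z).subset ?_
    rintro _ ⟨p, rfl⟩
    exact ⟨dimVec V p, ⟨fun i => Int.natCast_nonneg _,
      fun i => Int.ofNat_le.2 (Submodule.finrank_le (p i))⟩, rfl⟩

theorem phase_comp_dimVec (Z : (I → ℤ) →ₗ[ℤ] ℂ) (p q : ∀ i, Submodule ℂ (V i)) :
    phase (Z ∘ dimVec V) p q = Complex.arg (Z (dimVecBetween V p q)) :=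
  congrArg Complex.arg (map_sub Z _ _).symm

variable [Quiver I]

def subrepSublattice (f : ∀ ⦃i j : I⦄, (i ⟶ j) → (V i →ₗ[ℂ] V j)) :
    Sublattice (∀ i, Submodule ℂ (V i)) where
  carrier := {p | IsSubrep V f p}
  supClosed' p hp q hq i j e x hx := by
    obtain ⟨y, hy, w, hw, rfl⟩ := Submodule.mem_sup.1 hx
    rw [map_add]
    exact Submodule.add_mem_sup (hp e y hy) (hq e w hw)
  infClosed' p hp q hq i j e x hx := ⟨hp e x hx.1, hq e x hx.2⟩

theorem top_mem_subrepSublattice (f : ∀ ⦃i j : I⦄, (i ⟶ j) → (V i →ₗ[ℂ] V j)) :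
    ⊤ ∈ subrepSublattice V f :=
  fun _ _ _ _ _ => trivial

theorem bot_mem_subrepSublattice (f : ∀ ⦃i j : I⦄, (i ⟶ j) → (V i →ₗ[ℂ] V j)) :
    ⊥ ∈ subrepSublattice V f := by
  intro i j e x hx
  rw [Pi.bot_apply, Submodule.mem_bot] at hx ⊢
  rw [hx, map_zero]

variable {V} {f : ∀ ⦃i j : I⦄, (i ⟶ j) → (V i →ₗ[ℂ] V j)} {Z : (I → ℤ) →ₗ[ℤ] ℂ}

theorem semistableBetween_iff {p q : ∀ i, Submodule ℂ (V i)} :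
    SemistableBetween V f Z p q ↔ IsSemistable (subrepSublattice V f) (Z ∘ dimVec V) p q := by
  simp only [IsSemistable, phase_comp_dimVec, lt_iff_le_and_ne]
  exact ⟨fun h r hr ⟨hpr, hne⟩ hrq => h r hr hpr hrq hne.symm,
    fun h r hr hpr hrq hne => h r hr ⟨hpr, hne.symm⟩ hrq⟩

theorem isHNFiltration_iff {n : ℕ} {E : ℕ → ∀ i, Submodule ℂ (V i)} :
    IsHNFiltration V f Z n E ↔
      IsHNFiltrationFrom (subrepSublattice V f) (Z ∘ dimVec V) ⊥ n E := by
  constructor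
  · rintro ⟨hsub, h₀, htop, hle, hne, hss, hphase⟩
    exact ⟨hsub, h₀, htop, fun k hk => lt_of_le_of_ne (hle k hk) (hne k hk),
      fun k hk => semistableBetween_iff.1 (hss k hk),
      fun k hk => by simpa only [phase_comp_dimVec] using hphase k hk⟩
  · rintro ⟨hsub, h₀, htop, hlt, hss, hphase⟩
    exact ⟨hsub, h₀, htop, fun k hk => (hlt k hk).le, fun k hk => (hlt k hk).ne,
      fun k hk => semistableBetween_iff.2 (hss k hk),
      fun k hk => by simpa only [phase_comp_dimVec] using hphase k hk⟩

end QuiverRepresentation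

/-- every nonzero finite-dimensional representation of a finite quiver
admits a unique Harder–Narasimhan filtration with respect to a central charge `Z`
taking the standard basis vectors to the upper half plane. -/
theorem harder_narasimhan_exists_unique
    {I : Type*} [Quiver I] [Fintype I] [DecidableEq I] [∀ i j : I, Fintype (i ⟶ j)]
    (V : I → Type*) [∀ i, AddCommGroup (V i)] [∀ i, Module ℂ (V i)]
    [∀ i, FiniteDimensional ℂ (V i)]
    (f : ∀ ⦃i j : I⦄, (i ⟶ j) → (V i →ₗ[ℂ] V j))
    (Z : (I → ℤ) →ₗ[ℤ] ℂ) (hZ : ∀ i : I, 0 < (Z (Pi.single i 1)).im)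
    (hV : ∃ (i : I) (x : V i), x ≠ 0) :
    ∃! F : ℕ × (ℕ → ∀ i, Submodule ℂ (V i)), IsHNFiltration V f Z F.1 F.2 := by
  simp only [isHNFiltration_iff]
  exact (isCentralCharge_comp_dimVec V hZ).existsUnique_isHNFiltrationFrom
    (top_mem_subrepSublattice V f) (bot_mem_subrepSublattice V f)
end

section
/- Let D be a triangulated category with t-structure whose heart is A, let (T, F) be a torsion pair in A, and let (T′, F′) be a torsion pair in the tilted heart A^{(T[−1],F)} with T′ ⊂ F[0]. Then (T″, F″) with T″ = T ⋆ T′ and F″ = F ∩ T′^⊥ is a torsion pair in A, and the twice-tilted aisle satisfies (D_{≤0}^{(T[−1],F)})^{(T′[−1],F′)} = D_{≤0}^{(T″[−1],F″)}. -/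
open CategoryTheory CategoryTheory.Pretriangulated

section Tilting

variable (C : Type*) [Category C] [Limits.HasZeroObject C] [Preadditive C]
  [HasShift C ℤ] [∀ n : ℤ, Functor.Additive (shiftFunctor C n)] [Pretriangulated C]

/-- There is a distinguished triangle `X ⟶ Y ⟶ Z ⟶ X⟦1⟧`. -/
def DistTri (X Y Z : C) : Prop :=
  ∃ (f : X ⟶ Y) (g : Y ⟶ Z) (h : Z ⟶ X⟦(1 : ℤ)⟧),
    Triangle.mk f g h ∈ distinguishedTriangles

/-- A class of objects closed under isomorphism. -/
def IsoClosed (S : Set C) : Prop := ∀ X Y : C, (X ≅ Y) → X ∈ S → Y ∈ S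

/-- `S₁ ⋆ S₂`: the class of objects `Y` which are extensions of an object of `S₂`
by an object of `S₁`, i.e. which fit into a distinguished triangle
`X ⟶ Y ⟶ Z ⟶ X⟦1⟧` with `X ∈ S₁`, `Z ∈ S₂`. -/
def StarCls (S₁ S₂ : Set C) : Set C :=
  {Y | ∃ X ∈ S₁, ∃ Z ∈ S₂, DistTri C X Y Z}

/-- `Hom(S₁, S₂) = 0`. -/
def HomOrth (S₁ S₂ : Set C) : Prop :=
  ∀ X ∈ S₁, ∀ Y ∈ S₂, ∀ f : X ⟶ Y, f = 0

/-- The right orthogonal `S^⊥` of a class `S` inside the class `A`. -/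
def RightOrth (A S : Set C) : Set C :=
  {X ∈ A | ∀ Y ∈ S, ∀ f : Y ⟶ X, f = 0}

/-- `(T, F)` is a torsion pair in the heart `A`: both classes are iso-closed
subclasses of `A`, `Hom(T, F) = 0`, and every object `X ∈ A` sits in a short exact
sequence `0 → X_T → X → X_F → 0` (equivalently, a distinguished triangle with all
three terms in `A`) with `X_T ∈ T`, `X_F ∈ F`. -/
def IsTorsionPair (A T F : Set C) : Prop :=
  T ⊆ A ∧ F ⊆ A ∧ IsoClosed C T ∧ IsoClosed C F ∧ HomOrth C T F ∧
    ∀ X ∈ A, ∃ t ∈ T, ∃ f ∈ F, DistTri C t X f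

/-- `(Dle, Dge)` is a t-structure on `C`: `Dle n` plays the role of `D_{≤n}` and
`Dge n` of `D_{≥n}`. -/
def IsTStructure (Dle Dge : ℤ → Set C) : Prop :=
  (∀ n, IsoClosed C (Dle n)) ∧ (∀ n, IsoClosed C (Dge n)) ∧
  (∀ n, Dle n ⊆ Dle (n + 1)) ∧ (∀ n, Dge (n + 1) ⊆ Dge n) ∧
  (∀ (n k : ℤ) (X : C), X ∈ Dle n ↔ X⟦k⟧ ∈ Dle (n - k)) ∧
  (∀ (n k : ℤ) (X : C), X ∈ Dge n ↔ X⟦k⟧ ∈ Dge (n - k)) ∧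
  HomOrth C (Dle 0) (Dge 1) ∧
  (∀ X : C, ∃ A ∈ Dle 0, ∃ B ∈ Dge 1, DistTri C A X B)

/-- `H1` computes the first cohomology with values in the heart `A`, relative to the
aisle `D0 = D_{≤0}`, on objects of `D_{≤1}`: for `X` with `X⟦1⟧ ∈ D0` one has
`H¹(X) ∈ A` and a distinguished triangle `τ_{≤0}X ⟶ X ⟶ H¹(X)⟦−1⟧ ⟶` with
`τ_{≤0}X ∈ D0`. -/
def IsH1 (D0 A : Set C) (H1 : C → C) : Prop :=
  ∀ X : C, X⟦(1 : ℤ)⟧ ∈ D0 →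
    H1 X ∈ A ∧ ∃ Y ∈ D0, DistTri C Y X ((H1 X)⟦(-1 : ℤ)⟧)

end Tilting

/-!
Write `A' = F ⋆ T[-1]` for the tilted heart; it contains `F`, lies in `D_{≥0}` and receives no
nonzero map from `T`. Hence an object of `A` with no nonzero map to `F'` lies in `T ⋆ T'` (the
torsion-free part of its `(T, F)`-decomposition lies in `T'`), and `A' ∩ D_{≤0} ⊆ F`. For
`X ∈ A`, decompose `t → X → X_F` in `A` and `t' → X_F → f` in `A'`; then `f ∈ F ∩ T'^⊥`, and the
fibre `t''` of the composite `X → f` lies in `A` and has no map to `F'`. Lacking the octahedral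
axiom, we never exhibit `t''` as an extension of `t'` by `t`; it suffices that whatever is right
orthogonal to both `t` and `t'` is right orthogonal to `t''`.

For the aisles: if `X` lies in the twice tilted aisle, the triangle defining `H¹'(X)` shows
`X ∈ D_{≤1}` and `Hom(H¹(X), F') = 0`. Conversely, if `H¹(X)` is an extension of `p ∈ T'` by an
object of `T`, the fibre `Y` of `X → H¹(X)[-1] → p[-1]` lies in the first tilted aisle, and
uniqueness of truncation triangles gives `H¹'(X) ≅ p`.
-/

section

open CategoryTheory.Limits ZeroObject

variable {C : Type*} [Category C]

lemma IsoClosed.inter {S S' : Set C} (hS : IsoClosed C S) (hS' : IsoClosed C S') :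
    IsoClosed C (S ∩ S') :=
  fun X Y e hX => ⟨hS X Y e hX.1, hS' X Y e hX.2⟩

variable [Preadditive C]

lemma IsoClosed.rightOrth {A : Set C} (hA : IsoClosed C A) (S : Set C) :
    IsoClosed C (RightOrth C A S) := by
  refine fun X Y e hX => ⟨hA X Y e hX.1, fun Z hZ f => ?_⟩
  simpa using hX.2 Z hZ (f ≫ e.inv) =≫ e.hom

variable [HasShift C ℤ] [∀ n : ℤ, (CategoryTheory.shiftFunctor C n).Additive]

lemma shift_hom_eq_zero {P Q : C} (n : ℤ) (h : ∀ f : P ⟶ Q, f = 0) (f : P⟦n⟧ ⟶ Q⟦n⟧) :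
    f = 0 := by
  obtain ⟨g, rfl⟩ := (shiftFunctor C n).map_surjective f
  rw [h g, Functor.map_zero]

lemma isZero_of_isZero_shift {P : C} (n : ℤ) (h : IsZero (P⟦n⟧)) : IsZero P := by
  rw [IsZero.iff_id_eq_zero, ← (shiftFunctor C n).map_eq_zero_iff, (shiftFunctor C n).map_id]
  exact h.eq_of_src _ _

variable [HasZeroObject C] [Pretriangulated C]

namespace CategoryTheory.Pretriangulated.Triangle

variable {T : Triangle C}

lemma hom_obj₂_eq_zero (hT : T ∈ distTriang C) {W : C} (h₁ : ∀ f : T.obj₁ ⟶ W, f = 0)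
    (h₃ : ∀ f : T.obj₃ ⟶ W, f = 0) (f : T.obj₂ ⟶ W) : f = 0 := by
  obtain ⟨g, rfl⟩ := T.yoneda_exact₂ hT f (h₁ _)
  rw [h₃ g, Limits.comp_zero]

lemma hom_to_obj₂_eq_zero (hT : T ∈ distTriang C) {W : C} (h₁ : ∀ f : W ⟶ T.obj₁, f = 0)
    (h₃ : ∀ f : W ⟶ T.obj₃, f = 0) (f : W ⟶ T.obj₂) : f = 0 := by
  obtain ⟨g, rfl⟩ := T.coyoneda_exact₂ hT f (h₃ _)
  rw [h₁ g, Limits.zero_comp]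

lemma hom_obj₃_eq_zero_of_mor₂_comp (hT : T ∈ distTriang C) {W : C}
    (h : ∀ g : T.obj₁⟦(1 : ℤ)⟧ ⟶ W, g = 0) (f : T.obj₃ ⟶ W) (hf : T.mor₂ ≫ f = 0) : f = 0 := by
  obtain ⟨g, rfl⟩ := T.yoneda_exact₃ hT f hf
  rw [h g, Limits.comp_zero]

lemma isZero₃_of_mor₂_eq_zero (hT : T ∈ distTriang C) (h₂ : T.mor₂ = 0)
    (h : ∀ f : T.obj₁⟦(1 : ℤ)⟧ ⟶ T.obj₃, f = 0) : IsZero T.obj₃ :=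
  (IsZero.iff_id_eq_zero _).2 <| hom_obj₃_eq_zero_of_mor₂_comp hT h _ (by rw [h₂, Limits.zero_comp])

lemma isZero₁_of_mor₁_eq_zero (hT : T ∈ distTriang C) (h₁ : T.mor₁ = 0)
    (h : ∀ f : T.obj₁⟦(1 : ℤ)⟧ ⟶ T.obj₃, f = 0) : IsZero T.obj₁ := by
  obtain ⟨g, hg⟩ := T.coyoneda_exact₁ hT (𝟙 _) (by rw [h₁, Functor.map_zero, Limits.comp_zero])
  refine isZero_of_isZero_shift 1 ?_
  rw [IsZero.iff_id_eq_zero, hg, h g, Limits.zero_comp]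

end CategoryTheory.Pretriangulated.Triangle

section Triangles

variable {X Y Z t t' t'' W : C} {a : t ⟶ X} {b : X ⟶ Y} {c : Y ⟶ t⟦(1 : ℤ)⟧}
  {d : t' ⟶ Y} {e : Y ⟶ Z} {g : Z ⟶ t'⟦(1 : ℤ)⟧} {m : t'' ⟶ X} {n : Z ⟶ t''⟦(1 : ℤ)⟧}

lemma shift_fiber_comp_hom_eq_zero (h₁ : Triangle.mk a b c ∈ distTriang C)
    (h₂ : Triangle.mk d e g ∈ distTriang C) (h₃ : Triangle.mk m (b ≫ e) n ∈ distTriang C)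
    (hW₁ : ∀ f : t⟦(1 : ℤ)⟧ ⟶ W, f = 0) (hW₂ : ∀ f : t'⟦(1 : ℤ)⟧ ⟶ W, f = 0)
    (φ : t''⟦(1 : ℤ)⟧ ⟶ W) : φ = 0 := by
  have hben : (b ≫ e) ≫ n = 0 := comp_distTriang_mor_zero₂₃ _ h₃
  rw [Category.assoc] at hben
  obtain ⟨ξ, hξ⟩ : ∃ ξ : t⟦(1 : ℤ)⟧ ⟶ W, e ≫ n ≫ φ = c ≫ ξ :=
    Triangle.yoneda_exact₂ _ (rot_of_distTriang _ h₁) (e ≫ n ≫ φ)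
      (show b ≫ e ≫ n ≫ φ = 0 by rw [reassoc_of% hben, zero_comp])
  obtain ⟨ζ, hζ⟩ : ∃ ζ : t'⟦(1 : ℤ)⟧ ⟶ W, n ≫ φ = g ≫ ζ :=
    Triangle.yoneda_exact₂ _ (rot_of_distTriang _ h₂) (n ≫ φ)
      (show e ≫ n ≫ φ = 0 by rw [hξ, hW₁ ξ, comp_zero])
  obtain ⟨ψ, hψ⟩ : ∃ ψ : X⟦(1 : ℤ)⟧ ⟶ W, φ = (-m⟦(1 : ℤ)⟧') ≫ ψ :=
    Triangle.yoneda_exact₂ _ (rot_of_distTriang _ (rot_of_distTriang _ h₃)) φ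
      (show n ≫ φ = 0 by rw [hζ, hW₂ ζ, comp_zero])
  obtain ⟨ψ', hψ'⟩ : ∃ ψ' : Y⟦(1 : ℤ)⟧ ⟶ W, ψ = (-b⟦(1 : ℤ)⟧') ≫ ψ' :=
    Triangle.yoneda_exact₃ _ (rot_of_distTriang _ (rot_of_distTriang _ h₁)) ψ (hW₁ _)
  obtain ⟨ψ'', hψ''⟩ : ∃ ψ'' : Z⟦(1 : ℤ)⟧ ⟶ W, ψ' = (-e⟦(1 : ℤ)⟧') ≫ ψ'' :=
    Triangle.yoneda_exact₃ _ (rot_of_distTriang _ (rot_of_distTriang _ h₂)) ψ' (hW₂ _)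
  have hmbe : m ≫ b ≫ e = 0 := comp_distTriang_mor_zero₁₂ _ h₃
  rw [hψ, hψ', hψ'']
  simp only [Preadditive.neg_comp, Preadditive.comp_neg, neg_neg, ← Functor.map_comp_assoc,
    hmbe, Functor.map_zero, zero_comp, neg_zero]

lemma fiber_comp_hom_eq_zero (h₁ : Triangle.mk a b c ∈ distTriang C)
    (h₂ : Triangle.mk d e g ∈ distTriang C) (h₃ : Triangle.mk m (b ≫ e) n ∈ distTriang C)
    (hW₁ : ∀ f : t ⟶ W, f = 0) (hW₂ : ∀ f : t' ⟶ W, f = 0) (φ : t'' ⟶ W) : φ = 0 :=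
  (shiftFunctor C (1 : ℤ)).map_eq_zero_iff.mp <| shift_fiber_comp_hom_eq_zero h₁ h₂ h₃
    (shift_hom_eq_zero 1 hW₁) (shift_hom_eq_zero 1 hW₂) _

end Triangles

namespace IsTStructure

variable {Dle Dge : ℤ → Set C} (ht : IsTStructure C Dle Dge) {X Y : C}
include ht

lemma mem_le_of_le {n m : ℤ} (hX : X ∈ Dle n) (h : n ≤ m := by omega) : X ∈ Dle m :=
  Int.leInduction (motive := fun m _ => X ∈ Dle m) hX (fun m _ ih => ht.2.2.1 m ih) m h

lemma mem_ge_of_le {n m : ℤ} (hX : X ∈ Dge m) (h : n ≤ m := by omega) : X ∈ Dge n :=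
  Int.leInduction (motive := fun m _ => Dge m ⊆ Dge n) subset_rfl
    (fun m _ ih => (ht.2.2.2.1 m).trans ih) m h hX

lemma shift_mem_le {n : ℤ} (k : ℤ) (hX : X ∈ Dle n) : X⟦k⟧ ∈ Dle (n - k) :=
  (ht.2.2.2.2.1 n k X).1 hX

lemma shift_mem_ge {n : ℤ} (k : ℤ) (hX : X ∈ Dge n) : X⟦k⟧ ∈ Dge (n - k) :=
  (ht.2.2.2.2.2.1 n k X).1 hX

lemma mem_le_of_shift_mem {n : ℤ} (k : ℤ) (hX : X⟦k⟧ ∈ Dle (n - k)) : X ∈ Dle n :=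
  (ht.2.2.2.2.1 n k X).2 hX

lemma mem_ge_of_shift_mem {n : ℤ} (k : ℤ) (hX : X⟦k⟧ ∈ Dge (n - k)) : X ∈ Dge n :=
  (ht.2.2.2.2.2.1 n k X).2 hX

lemma hom_eq_zero {a b : ℤ} (hX : X ∈ Dle a) (hY : Y ∈ Dge b) (hab : a < b := by omega) :
    ∀ f : X ⟶ Y, f = 0 := fun f => by
  rw [← (shiftFunctor C a).map_eq_zero_iff]
  exact ht.2.2.2.2.2.2.1 _ (ht.mem_le_of_le (ht.shift_mem_le a hX))
    _ (ht.mem_ge_of_le (ht.shift_mem_ge a hY)) _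

lemma mem_le_zero_of_hom_eq_zero (h : ∀ Z ∈ Dge 1, ∀ f : X ⟶ Z, f = 0) : X ∈ Dle 0 := by
  obtain ⟨X₀, hX₀, X₁, hX₁, a, b, c, hT⟩ := ht.2.2.2.2.2.2.2 X
  have : IsIso a := (Triangle.isZero₃_iff_isIso₁ _ hT).1
    (Triangle.isZero₃_of_mor₂_eq_zero hT (h _ hX₁ b) (ht.hom_eq_zero (ht.shift_mem_le 1 hX₀) hX₁))
  exact ht.1 0 X₀ X (asIso a) hX₀

lemma mem_ge_one_of_hom_eq_zero (h : ∀ W ∈ Dle 0, ∀ f : W ⟶ X, f = 0) : X ∈ Dge 1 := by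
  obtain ⟨X₀, hX₀, X₁, hX₁, a, b, c, hT⟩ := ht.2.2.2.2.2.2.2 X
  have : IsIso b := (Triangle.isZero₁_iff_isIso₂ _ hT).1
    (Triangle.isZero₁_of_mor₁_eq_zero hT (h _ hX₀ a) (ht.hom_eq_zero (ht.shift_mem_le 1 hX₀) hX₁))
  exact ht.2.1 1 X₁ X (asIso b).symm hX₁

lemma mem_le_of_distTriang {T : Triangle C} (hT : T ∈ distTriang C) {n : ℤ}
    (h₁ : T.obj₁ ∈ Dle n) (h₃ : T.obj₃ ∈ Dle n) : T.obj₂ ∈ Dle n := by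
  refine ht.mem_le_of_shift_mem n (ht.mem_le_of_le (ht.mem_le_zero_of_hom_eq_zero fun Z hZ =>
    Triangle.hom_obj₂_eq_zero (Triangle.shift_distinguished T hT n) ?_ ?_))
  · exact ht.hom_eq_zero (ht.shift_mem_le n h₁) hZ
  · exact ht.hom_eq_zero (ht.shift_mem_le n h₃) hZ

lemma mem_ge_of_distTriang {T : Triangle C} (hT : T ∈ distTriang C) {n : ℤ}
    (h₁ : T.obj₁ ∈ Dge n) (h₃ : T.obj₃ ∈ Dge n) : T.obj₂ ∈ Dge n := by
  refine ht.mem_ge_of_shift_mem (n - 1) (ht.mem_ge_of_le (ht.mem_ge_one_of_hom_eq_zero fun W hW =>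
    Triangle.hom_to_obj₂_eq_zero (Triangle.shift_distinguished T hT (n - 1)) ?_ ?_))
  · exact ht.hom_eq_zero hW (ht.shift_mem_ge (n - 1) h₁)
  · exact ht.hom_eq_zero hW (ht.shift_mem_ge (n - 1) h₃)

lemma mem_heart_of_isZero (hX : IsZero X) : X ∈ Dle 0 ∩ Dge 0 :=
  ⟨ht.mem_le_zero_of_hom_eq_zero fun _ _ f => hX.eq_of_src f 0,
    ht.mem_ge_of_le (ht.mem_ge_one_of_hom_eq_zero fun _ _ f => hX.eq_of_tgt f 0)⟩

lemma isoClosed_heart : IsoClosed C (Dle 0 ∩ Dge 0) :=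
  fun X Y e hX => ⟨ht.1 0 X Y e hX.1, ht.2.1 0 X Y e hX.2⟩

end IsTStructure

lemma nonempty_iso_of_distTriang {M Y₁ Z₁ Y₂ Z₂ : C} {i₁ : Y₁ ⟶ M} {u₁ : M ⟶ Z₁}
    {d₁ : Z₁ ⟶ Y₁⟦(1 : ℤ)⟧} {i₂ : Y₂ ⟶ M} {u₂ : M ⟶ Z₂} {d₂ : Z₂ ⟶ Y₂⟦(1 : ℤ)⟧}
    (h₁ : Triangle.mk i₁ u₁ d₁ ∈ distTriang C) (h₂ : Triangle.mk i₂ u₂ d₂ ∈ distTriang C)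
    (h₁₂ : ∀ f : Y₁ ⟶ Z₂, f = 0) (h₂₁ : ∀ f : Y₂ ⟶ Z₁, f = 0)
    (h₁₁ : ∀ f : Y₁⟦(1 : ℤ)⟧ ⟶ Z₁, f = 0) (h₂₂ : ∀ f : Y₂⟦(1 : ℤ)⟧ ⟶ Z₂, f = 0) :
    Nonempty (Z₁ ≅ Z₂) := by
  obtain ⟨φ, hφ⟩ : ∃ φ : Z₁ ⟶ Z₂, u₂ = u₁ ≫ φ := Triangle.yoneda_exact₂ _ h₁ u₂ (h₁₂ _)
  obtain ⟨ψ, hψ⟩ : ∃ ψ : Z₂ ⟶ Z₁, u₁ = u₂ ≫ ψ := Triangle.yoneda_exact₂ _ h₂ u₁ (h₂₁ _)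
  have hφψ : φ ≫ ψ - 𝟙 Z₁ = 0 := Triangle.hom_obj₃_eq_zero_of_mor₂_comp h₁ h₁₁ _
    (show u₁ ≫ (φ ≫ ψ - 𝟙 Z₁) = 0 by simp [← reassoc_of% hφ, ← hψ])
  have hψφ : ψ ≫ φ - 𝟙 Z₂ = 0 := Triangle.hom_obj₃_eq_zero_of_mor₂_comp h₂ h₂₂ _
    (show u₂ ≫ (ψ ≫ φ - 𝟙 Z₂) = 0 by simp [← reassoc_of% hψ, ← hφ])
  exact ⟨⟨φ, ψ, sub_eq_zero.mp hφψ, sub_eq_zero.mp hψφ⟩⟩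

section StarCls

variable {S₁ S₂ G : Set C}

lemma isoClosed_starCls : IsoClosed C (StarCls C S₁ S₂) := by
  rintro Y Y' e ⟨X, hX, Z, hZ, f, g, h, hT⟩
  refine ⟨X, hX, Z, hZ, f ≫ e.hom, e.inv ≫ g, h, isomorphic_distinguished _ hT _ ?_⟩
  exact Triangle.isoMk _ _ (Iso.refl _) e.symm (Iso.refl _) (by simp [Triangle.mk])
    (by simp [Triangle.mk]) (by simp [Triangle.mk])

lemma homOrth_starCls (h₁ : HomOrth C S₁ G) (h₂ : HomOrth C S₂ G) :
    HomOrth C (StarCls C S₁ S₂) G := by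
  rintro Y ⟨X, hX, Z, hZ, f, g, h, hT⟩ W hW
  exact Triangle.hom_obj₂_eq_zero hT (h₁ X hX W hW) (h₂ Z hZ W hW)

lemma mem_starCls_of_isZero {X N : C} (hX : X ∈ S₁) (hN : N ∈ S₂) (hN₀ : IsZero N) :
    X ∈ StarCls C S₁ S₂ := by
  refine ⟨X, hX, N, hN, 𝟙 X, 0, 0, isomorphic_distinguished _ (contractible_distinguished X) _ ?_⟩
  exact Triangle.isoMk _ _ (Iso.refl _) (Iso.refl _) (hN₀.iso (isZero_zero C))
    rfl ((isZero_zero C).eq_of_tgt _ _) (hN₀.eq_of_src _ _)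

end StarCls

namespace IsTorsionPair

variable {A T F : Set C} (hTF : IsTorsionPair C A T F)
  (hTF_shift : ∀ t ∈ T, ∀ f ∈ F, ∀ u : t⟦(1 : ℤ)⟧ ⟶ f, u = 0)
include hTF hTF_shift

lemma mem_torsion_of_hom_eq_zero {X : C} (hX : X ∈ A) (h : ∀ Y ∈ F, ∀ f : X ⟶ Y, f = 0) :
    X ∈ T := by
  obtain ⟨t, ht, f, hf, a, b, c, hT⟩ := hTF.2.2.2.2.2 X hX
  have : IsIso a := (Triangle.isZero₃_iff_isIso₁ _ hT).1
    (Triangle.isZero₃_of_mor₂_eq_zero hT (h f hf b) (hTF_shift t ht f hf))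
  exact hTF.2.2.1 t X (asIso a) ht

lemma mem_torsionFree_of_hom_eq_zero {X : C} (hX : X ∈ A) (h : ∀ Y ∈ T, ∀ f : Y ⟶ X, f = 0) :
    X ∈ F := by
  obtain ⟨t, ht, f, hf, a, b, c, hT⟩ := hTF.2.2.2.2.2 X hX
  have : IsIso b := (Triangle.isZero₁_iff_isIso₂ _ hT).1
    (Triangle.isZero₁_of_mor₁_eq_zero hT (h t ht a) (hTF_shift t ht f hf))
  exact hTF.2.2.2.1 f X (asIso b).symm hf

end IsTorsionPair

lemma IsH1.nonempty_iso {D0 A : Set C} {H1 : C → C} (hH1 : IsH1 C D0 A H1)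
    (h₀ : ∀ Y ∈ D0, ∀ z ∈ A, ∀ f : Y ⟶ z⟦(-1 : ℤ)⟧, f = 0)
    (h₁ : ∀ Y ∈ D0, ∀ z ∈ A, ∀ f : Y⟦(1 : ℤ)⟧ ⟶ z⟦(-1 : ℤ)⟧, f = 0)
    {X Y z : C} {i : Y ⟶ X} {u : X ⟶ z⟦(-1 : ℤ)⟧} {d : z⟦(-1 : ℤ)⟧ ⟶ Y⟦(1 : ℤ)⟧}
    (hX : X⟦(1 : ℤ)⟧ ∈ D0) (hY : Y ∈ D0) (hz : z ∈ A) (hT : Triangle.mk i u d ∈ distTriang C) :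
    Nonempty (H1 X ≅ z) := by
  obtain ⟨hH1X, τ, hτ, i', u', d', hT'⟩ := hH1 X hX
  obtain ⟨e⟩ := nonempty_iso_of_distTriang hT' hT (h₀ τ hτ z hz) (h₀ Y hY _ hH1X)
    (h₁ τ hτ _ hH1X) (h₁ Y hY z hz)
  exact ⟨(shiftFunctor C (-1 : ℤ)).preimageIso e⟩

section Tilt

/-- For `D0 = D_{≤0}` with cohomology `H1`, the tilted aisle `{X ∈ D_{≤1} : H¹(X) ∈ S}`. -/
def tiltedAisle (D0 : Set C) (H1 : C → C) (S : Set C) : Set C :=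
  {X | X⟦(1 : ℤ)⟧ ∈ D0 ∧ H1 X ∈ S}

def tiltedHeart (T F : Set C) : Set C :=
  StarCls C F ((fun X : C => X⟦(-1 : ℤ)⟧) '' T)

variable {Dle Dge : ℤ → Set C} (ht : IsTStructure C Dle Dge)
include ht

lemma IsH1.hom_eq_zero {A : Set C} {H1 : C → C} (hH1 : IsH1 C (Dle 0) A H1) {X w : C}
    (hX : X⟦(1 : ℤ)⟧ ∈ Dle 0) (hw : w ∈ Dge 0) (h : ∀ f : X ⟶ w⟦(-1 : ℤ)⟧, f = 0)
    (φ : H1 X ⟶ w) : φ = 0 := by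
  obtain ⟨-, τ, hτ, i, u, d, hT⟩ := hH1 X hX
  rw [← (shiftFunctor C (-1 : ℤ)).map_eq_zero_iff]
  exact Triangle.hom_obj₂_eq_zero (rot_of_distTriang _ hT) h
    (ht.hom_eq_zero (ht.shift_mem_le 1 hτ) (ht.shift_mem_ge (-1) hw)) _

variable {T F : Set C} (hTF : IsTorsionPair C (Dle 0 ∩ Dge 0) T F)
include hTF

lemma IsTorsionPair.hom_shift_eq_zero :
    ∀ t ∈ T, ∀ f ∈ F, ∀ u : t⟦(1 : ℤ)⟧ ⟶ f, u = 0 :=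
  fun _ ht' _ hf => ht.hom_eq_zero (ht.shift_mem_le 1 (hTF.1 ht').1) (hTF.2.1 hf).2

lemma H1_mem_torsion_of_hom_eq_zero {H1 : C → C} (hH1 : IsH1 C (Dle 0) (Dle 0 ∩ Dge 0) H1)
    {X : C} (hX : X⟦(1 : ℤ)⟧ ∈ Dle 0) (h : ∀ w ∈ F, ∀ f : X ⟶ w⟦(-1 : ℤ)⟧, f = 0) : H1 X ∈ T :=
  hTF.mem_torsion_of_hom_eq_zero (hTF.hom_shift_eq_zero ht) (hH1 X hX).1
    fun w hw => IsH1.hom_eq_zero ht hH1 hX (hTF.2.1 hw).2 (h w hw)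

lemma tiltedHeart_subset_ge : tiltedHeart T F ⊆ Dge 0 := by
  rintro z ⟨e, he, _, ⟨s, hs, rfl⟩, i, u, d, hT⟩
  exact ht.mem_ge_of_distTriang hT (hTF.2.1 he).2
    (ht.mem_ge_of_le (ht.shift_mem_ge (-1) (hTF.1 hs).2))

lemma hom_torsion_tiltedHeart_eq_zero {t z : C} (htT : t ∈ T) (hz : z ∈ tiltedHeart T F) :
    ∀ f : t ⟶ z, f = 0 := by
  obtain ⟨e, he, _, ⟨s, hs, rfl⟩, i, u, d, hT⟩ := hz
  exact Triangle.hom_to_obj₂_eq_zero hT (hTF.2.2.2.2.1 t htT e he)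
    (ht.hom_eq_zero (hTF.1 htT).1 (ht.shift_mem_ge (-1) (hTF.1 hs).2))

lemma torsionFree_subset_tiltedHeart : F ⊆ tiltedHeart T F := by
  have h0 : (0 : C) ∈ T := hTF.mem_torsion_of_hom_eq_zero (hTF.hom_shift_eq_zero ht)
    (ht.mem_heart_of_isZero (isZero_zero C)) fun _ _ f => (isZero_zero C).eq_of_src f 0
  exact fun X hX => mem_starCls_of_isZero hX ⟨0, h0, rfl⟩
    (Functor.map_isZero _ (isZero_zero C))

lemma tiltedHeart_inter_le_subset : tiltedHeart T F ∩ Dle 0 ⊆ F :=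
  fun _ hX => hTF.mem_torsionFree_of_hom_eq_zero (hTF.hom_shift_eq_zero ht)
    ⟨hX.2, tiltedHeart_subset_ge ht hTF hX.1⟩
    fun _ ht' => hom_torsion_tiltedHeart_eq_zero ht hTF ht' hX.1

lemma hom_tiltedAisle_tiltedHeart_eq_zero {H1 : C → C}
    (hH1 : IsH1 C (Dle 0) (Dle 0 ∩ Dge 0) H1) {Y z : C} (hY : Y ∈ tiltedAisle (Dle 0) H1 T)
    (hz : z ∈ tiltedHeart T F) : ∀ f : Y ⟶ z⟦(-1 : ℤ)⟧, f = 0 := by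
  obtain ⟨-, τ, hτ, i, u, d, hT⟩ := hH1 Y hY.1
  exact Triangle.hom_obj₂_eq_zero hT
    (ht.hom_eq_zero hτ (ht.shift_mem_ge (-1) (tiltedHeart_subset_ge ht hTF hz)))
    (shift_hom_eq_zero (-1) (hom_torsion_tiltedHeart_eq_zero ht hTF hY.2 hz))

variable {T' F' : Set C} (hT'F' : IsTorsionPair C (tiltedHeart T F) T' F') (hT'le : T' ⊆ F)
include hT'F' hT'le

lemma mem_starCls_of_hom_eq_zero {X : C} (hX : X ∈ Dle 0 ∩ Dge 0)
    (h : ∀ y ∈ F', ∀ f : X ⟶ y, f = 0) : X ∈ StarCls C T T' := by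
  obtain ⟨t, htT, f, hf, a, b, c, hT⟩ := hTF.2.2.2.2.2 X hX
  refine ⟨t, htT, f, hT'F'.mem_torsion_of_hom_eq_zero ?_ (torsionFree_subset_tiltedHeart ht hTF hf)
    fun y hy φ => Triangle.hom_obj₃_eq_zero_of_mor₂_comp hT ?_ φ (h y hy _), a, b, c, hT⟩
  · exact fun t' ht' y hy => ht.hom_eq_zero (ht.shift_mem_le 1 (hTF.2.1 (hT'le ht')).1)
      (tiltedHeart_subset_ge ht hTF (hT'F'.2.1 hy))
  · exact ht.hom_eq_zero (ht.shift_mem_le 1 (hTF.1 htT).1)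
      (tiltedHeart_subset_ge ht hTF (hT'F'.2.1 hy))

lemma exists_distTri_starCls_rightOrth {X : C} (hX : X ∈ Dle 0 ∩ Dge 0) :
    ∃ t ∈ StarCls C T T', ∃ f ∈ F ∩ RightOrth C (Dle 0 ∩ Dge 0) T', DistTri C t X f := by
  obtain ⟨t, htT, fX, hfX, a, b, c, h₁⟩ := hTF.2.2.2.2.2 X hX
  obtain ⟨t', ht', f, hf, d, e, g, h₂⟩ :=
    hT'F'.2.2.2.2.2 fX (torsionFree_subset_tiltedHeart ht hTF hfX)
  have ht'F : t' ∈ Dle 0 ∩ Dge 0 := hTF.2.1 (hT'le ht')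
  have hfF : f ∈ F := tiltedHeart_inter_le_subset ht hTF ⟨hT'F'.2.1 hf,
    ht.mem_le_of_distTriang (rot_of_distTriang _ h₂) (hTF.2.1 hfX).1
      (ht.mem_le_of_le (ht.shift_mem_le 1 ht'F.1))⟩
  obtain ⟨t'', m, n, h₃⟩ := distinguished_cocone_triangle₁ (b ≫ e)
  have ht''le : t'' ∈ Dle 0 := ht.mem_le_zero_of_hom_eq_zero fun Z hZ =>
    fiber_comp_hom_eq_zero h₁ h₂ h₃ (ht.hom_eq_zero (hTF.1 htT).1 hZ) (ht.hom_eq_zero ht'F.1 hZ)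
  have ht''ge : t'' ∈ Dge 0 := ht.mem_ge_of_distTriang (inv_rot_of_distTriang _ h₃)
    (ht.mem_ge_of_le (ht.shift_mem_ge (-1) (hTF.2.1 hfF).2)) hX.2
  refine ⟨t'', ?_, f, ⟨hfF, hTF.2.1 hfF, fun y hy => hT'F'.2.2.2.2.1 y hy f hf⟩,
    m, b ≫ e, n, h₃⟩
  exact mem_starCls_of_hom_eq_zero ht hTF hT'F' hT'le ⟨ht''le, ht''ge⟩ fun y hy =>
    fiber_comp_hom_eq_zero h₁ h₂ h₃ (hom_torsion_tiltedHeart_eq_zero ht hTF htT (hT'F'.2.1 hy))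
      (hT'F'.2.2.2.2.1 t' ht' y hy)

lemma isTorsionPair_starCls_rightOrth :
    IsTorsionPair C (Dle 0 ∩ Dge 0) (StarCls C T T') (F ∩ RightOrth C (Dle 0 ∩ Dge 0) T') := by
  refine ⟨?_, fun X hX => hTF.2.1 hX.1, isoClosed_starCls,
    hTF.2.2.2.1.inter (ht.isoClosed_heart.rightOrth T'), ?_,
    fun X hX => exists_distTri_starCls_rightOrth ht hTF hT'F' hT'le hX⟩
  · rintro X ⟨t, htT, f, hf, a, b, c, hT⟩
    have htA := hTF.1 htT
    have hfA := hTF.2.1 (hT'le hf)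
    exact ⟨ht.mem_le_of_distTriang hT htA.1 hfA.1, ht.mem_ge_of_distTriang hT htA.2 hfA.2⟩
  · exact homOrth_starCls (fun t ht' f hf => hTF.2.2.2.2.1 t ht' f hf.1)
      fun t ht' f hf => hf.2.2 t ht'

variable {H1 H1' : C → C} (hH1 : IsH1 C (Dle 0) (Dle 0 ∩ Dge 0) H1)
include hH1

lemma tiltedAisle_tiltedAisle_subset
    (hH1' : IsH1 C (tiltedAisle (Dle 0) H1 T) (tiltedHeart T F) H1') :
    tiltedAisle (tiltedAisle (Dle 0) H1 T) H1' T' ⊆ tiltedAisle (Dle 0) H1 (StarCls C T T') := by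
  rintro X ⟨hX', hH1'X⟩
  obtain ⟨-, τ, hτ, i, u, d, hT⟩ := hH1' X hX'
  have hN : H1' X ∈ Dle 0 ∩ Dge 0 := hTF.2.1 (hT'le hH1'X)
  have hX₁ : X ∈ Dle 1 := ht.mem_le_of_distTriang hT
    (ht.mem_le_of_shift_mem 1 (ht.mem_le_of_le hτ.1)) (ht.mem_le_of_le (ht.shift_mem_le (-1) hN.1))
  have hX : X⟦(1 : ℤ)⟧ ∈ Dle 0 := ht.mem_le_of_le (ht.shift_mem_le 1 hX₁)
  refine ⟨hX, mem_starCls_of_hom_eq_zero ht hTF hT'F' hT'le (hH1 X hX).1 fun y hy =>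
    hH1.hom_eq_zero ht hX (tiltedHeart_subset_ge ht hTF (hT'F'.2.1 hy)) ?_⟩
  exact Triangle.hom_obj₂_eq_zero hT
    (hom_tiltedAisle_tiltedHeart_eq_zero ht hTF hH1 hτ (hT'F'.2.1 hy))
    (shift_hom_eq_zero (-1) (hT'F'.2.2.2.2.1 _ hH1'X y hy))

lemma subset_tiltedAisle_tiltedAisle
    (hH1' : IsH1 C (tiltedAisle (Dle 0) H1 T) (tiltedHeart T F) H1') :
    tiltedAisle (Dle 0) H1 (StarCls C T T') ⊆ tiltedAisle (tiltedAisle (Dle 0) H1 T) H1' T' := by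
  rintro X ⟨hX, t, htT, p, hp, a, b, c, hB⟩
  obtain ⟨-, τ, hτ, i, u, d, h₁⟩ := hH1 X hX
  -- `t⟦-1⟧ → H¹(X)⟦-1⟧ → p⟦-1⟧`, whose maps carry the sign `(-1)^(-1)` of shifted triangles
  have h₂ := Triangle.shift_distinguished _ hB (-1)
  obtain ⟨Y, m, n, h₃⟩ := distinguished_cocone_triangle₁ (u ≫ ((-1 : ℤ).negOnePow • b⟦(-1 : ℤ)⟧'))
  have hY : Y⟦(1 : ℤ)⟧ ∈ Dle 0 := ht.mem_le_zero_of_hom_eq_zero fun Z hZ =>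
    shift_fiber_comp_hom_eq_zero h₁ h₂ h₃ (ht.hom_eq_zero (ht.shift_mem_le 1 hτ) hZ)
      (ht.hom_eq_zero (ht.shift_mem_le 1 (ht.shift_mem_le (-1) (hTF.1 htT).1)) hZ)
  have hY' : Y ∈ tiltedAisle (Dle 0) H1 T := ⟨hY, H1_mem_torsion_of_hom_eq_zero ht hTF hH1 hY
    fun w hw => fiber_comp_hom_eq_zero h₁ h₂ h₃
      (ht.hom_eq_zero hτ (ht.shift_mem_ge (-1) (hTF.2.1 hw).2))
      (shift_hom_eq_zero (-1) (hTF.2.2.2.2.1 t htT w hw))⟩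
  have hX1 : X⟦(1 : ℤ)⟧⟦(1 : ℤ)⟧ ∈ Dle 0 := ht.mem_le_of_le (ht.shift_mem_le 1 hX)
  have hX' : X⟦(1 : ℤ)⟧ ∈ tiltedAisle (Dle 0) H1 T := ⟨hX1,
    H1_mem_torsion_of_hom_eq_zero ht hTF hH1 hX1
      fun w hw => ht.hom_eq_zero hX (ht.shift_mem_ge (-1) (hTF.2.1 hw).2)⟩
  obtain ⟨e⟩ := hH1'.nonempty_iso
    (fun _ hV _ hz => hom_tiltedAisle_tiltedHeart_eq_zero ht hTF hH1 hV hz)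
    (fun _ hV _ hz => ht.hom_eq_zero hV.1 (ht.shift_mem_ge (-1) (tiltedHeart_subset_ge ht hTF hz)))
    hX' hY' (torsionFree_subset_tiltedHeart ht hTF (hT'le hp)) h₃
  exact ⟨hX', hT'F'.2.2.1 p _ e.symm hp⟩

end Tilt

end

/-- Let `D` be a triangulated category with a t-structure
`(D_{≤0}, D_{≥1})` with heart `A`, let `(T, F)` be a torsion pair in `A`, and let
`(T′, F′)` be a torsion pair in the tilted heart `A^{(T[−1],F)} = F ⋆ T[−1]` with
`T′ ⊆ F`.  Then `(T″, F″)` with `T″ = T ⋆ T′` and `F″ = F ∩ T′^⊥` is a torsion pair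
in `A`, and the twice-tilted aisle satisfies
`(D_{≤0}^{(T[−1],F)})^{(T′[−1],F′)} = D_{≤0}^{(T″[−1],F″)}`, where the tilted aisle
is described by `D_{≤0}^{(T[−1],F)} = {X ∈ D_{≤1} : H¹_A(X) ∈ T}` (and similarly for
the second tilt, using the cohomology `H¹` of the tilted t-structure). -/
theorem double_tilting_torsion_pairs
    (C : Type*) [Category C] [Limits.HasZeroObject C] [Preadditive C]
    [HasShift C ℤ] [∀ n : ℤ, Functor.Additive (shiftFunctor C n)] [Pretriangulated C]
    (Dle Dge : ℤ → Set C) (ht : IsTStructure C Dle Dge)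
    -- the heart of the t-structure
    (A : Set C) (hA : A = Dle 0 ∩ Dge 0)
    -- a torsion pair (T, F) in the heart
    (T F : Set C) (hTF : IsTorsionPair C A T F)
    -- the cohomology functor H¹ of the original t-structure
    (H1 : C → C) (hH1 : IsH1 C (Dle 0) A H1)
    -- the tilted aisle D_{≤0}^{(T[−1],F)} and the tilted heart A^{(T[−1],F)} = F ⋆ T[−1]
    (Dle' A' : Set C)
    (hDle' : Dle' = {X : C | X⟦(1 : ℤ)⟧ ∈ Dle 0 ∧ H1 X ∈ T})
    (hA' : A' = StarCls C F ((fun X : C => X⟦(-1 : ℤ)⟧) '' T))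
    -- a torsion pair (T′, F′) in the tilted heart with T′ ⊆ F[0]
    (T' F' : Set C) (hT'F' : IsTorsionPair C A' T' F') (hT'le : T' ⊆ F)
    -- the cohomology functor H¹ of the tilted t-structure
    (H1' : C → C) (hH1' : IsH1 C Dle' A' H1') :
    IsTorsionPair C A (StarCls C T T') (F ∩ RightOrth C A T') ∧
    {X : C | X⟦(1 : ℤ)⟧ ∈ Dle' ∧ H1' X ∈ T'} =
      {X : C | X⟦(1 : ℤ)⟧ ∈ Dle 0 ∧ H1 X ∈ StarCls C T T'} := by
  subst hA hDle' hA'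
  exact ⟨isTorsionPair_starCls_rightOrth ht hTF hT'F' hT'le,
    (tiltedAisle_tiltedAisle_subset ht hTF hT'F' hT'le hH1 hH1').antisymm
      (subset_tiltedAisle_tiltedAisle ht hTF hT'F' hT'le hH1 hH1')⟩
end
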